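/- arXiv:1310.2214 — 4 statements merged into one kernel-verified Lean document; each statement's English description precedes it below -/
import Mathlib

section
/- Let T be a temperature profile for an admissible radius a. Then T is nonincreasing on [0,ℓ] and satisfies T∞ ≤ T(x) ≤ Td for every x ∈ [0,ℓ]. -/
open MeasureTheory Set

noncomputable section

private lemma stieltjes_apply_of_continuous {G : ℝ → ℝ} (hG : Monotone G) (hc : Continuous G)
    (x : ℝ) : hG.stieltjesFunction x = G x := by
  rw [hG.stieltjesFunction_eq]
  exact rightLim_eq_of_tendsto
    ((hc.tendsto x).mono_left nhdsWithin_le_nhds)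

private lemma lip_deriv_nonpos {K : NNReal} {H : ℝ → ℝ} (hH : LipschitzWith K H)
    {s t : ℝ} (hst : s ≤ t)
    (hd : ∀ᵐ x ∂(volume.restrict (Ioo s t)), deriv H x ≤ 0) :
    H t ≤ H s := by
  set G : ℝ → ℝ := fun x => H x + K * x with hGdef
  set D : ℝ → ℝ := fun x => K * x - H x with hDdef
  have key : ∀ x y : ℝ, x ≤ y → |H x - H y| ≤ K * (y - x) := by
    intro x y hxy
    have h := hH.dist_le_mul x y
    rw [Real.dist_eq, Real.dist_eq] at h
    have h2 : |x - y| = y - x := by rw [abs_of_nonpos (by linarith), neg_sub]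
    rwa [h2] at h
  have hGmono : Monotone G := by
    intro x y hxy
    have h := (abs_le.1 (key x y hxy)).2
    simp only [hGdef]
    nlinarith
  have hDmono : Monotone D := by
    intro x y hxy
    have h := (abs_le.1 (key x y hxy)).1
    simp only [hDdef]
    nlinarith
  have hGcont : Continuous G := hH.continuous.add (continuous_const.mul continuous_id)
  have hDcont : Continuous D := (continuous_const.mul continuous_id).sub hH.continuous
  set c : NNReal := 2 * K with hcdef
  have hLmono : Monotone (fun x : ℝ => (c : ℝ) * x) := by
    intro x y hxy
    dsimp only
    nlinarith [c.coe_nonneg]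
  have hLcont : Continuous (fun x : ℝ => (c : ℝ) * x) := continuous_const.mul continuous_id
  set fG := hGmono.stieltjesFunction with hfGdef
  set fD := hDmono.stieltjesFunction with hfDdef
  set fL := hLmono.stieltjesFunction with hfLdef
  have hfG : ∀ x, fG x = G x := stieltjes_apply_of_continuous hGmono hGcont
  have hfD : ∀ x, fD x = D x := stieltjes_apply_of_continuous hDmono hDcont
  have hfL : ∀ x, fL x = c * x := stieltjes_apply_of_continuous hLmono hLcont
  have hsum : fG + fD = fL := by
    ext x
    rw [StieltjesFunction.add_apply, hfG, hfD, hfL]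
    simp only [hGdef, hDdef, hcdef]
    push_cast
    ring
  have hLvol : fL.measure = (c : ENNReal) • volume := by
    refine Measure.ext_of_Ioc _ _ (fun a b hab => ?_)
    rw [StieltjesFunction.measure_Ioc, hfL, hfL, Measure.smul_apply, Real.volume_Ioc,
      smul_eq_mul, ← ENNReal.ofReal_coe_nnreal, ← ENNReal.ofReal_mul c.coe_nonneg]
    ring_nf
  have hac : fG.measure ≪ volume := by
    intro A hA
    have h1 : fG.measure A ≤ fL.measure A := by
      rw [← hsum, StieltjesFunction.measure_add, Measure.add_apply]
      exact le_add_right le_rfl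
    rw [hLvol, Measure.smul_apply, smul_eq_mul, hA, mul_zero] at h1
    exact le_antisymm h1 zero_le
  have hae1 := fG.ae_hasDerivAt
  have hGfun : (fG : ℝ → ℝ) = G := funext hfG
  rw [hGfun] at hae1
  have hderivH : ∀ᵐ x, deriv H x = (fG.measure.rnDeriv volume x).toReal - K := by
    filter_upwards [hae1] with x hx
    have h2 : HasDerivAt H ((fG.measure.rnDeriv volume x).toReal - K * 1) x := by
      have := hx.sub ((hasDerivAt_id x).const_mul (K : ℝ))
      have hHG : H = G - fun y => (K : ℝ) * id y := by
        ext y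
        simp only [hGdef, id, Pi.sub_apply]
        ring
      rw [hHG]
      exact this
    rw [h2.deriv]
    ring
  have hbound : ∀ᵐ x ∂(volume.restrict (Ioo s t)),
      fG.measure.rnDeriv volume x ≤ (K : ENNReal) := by
    filter_upwards [hd, ae_restrict_of_ae hderivH,
      ae_restrict_of_ae (Measure.rnDeriv_lt_top fG.measure volume)] with x h1 h2 h3
    have h4 : (fG.measure.rnDeriv volume x).toReal ≤ (K : ℝ) := by
      rw [h2] at h1; linarith
    rw [← ENNReal.ofReal_toReal h3.ne, ← ENNReal.ofReal_coe_nnreal]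
    exact ENNReal.ofReal_le_ofReal h4
  have hint : fG.measure (Ioc s t) ≤ (K : ENNReal) * volume (Ioc s t) := by
    conv_lhs => rw [← Measure.withDensity_rnDeriv_eq fG.measure volume hac]
    rw [withDensity_apply _ measurableSet_Ioc,
      ← Measure.restrict_congr_set Ioo_ae_eq_Ioc]
    calc ∫⁻ x in Ioo s t, fG.measure.rnDeriv volume x ∂volume
        ≤ ∫⁻ _x in Ioo s t, (K : ENNReal) ∂volume := lintegral_mono_ae hbound
      _ = (K : ENNReal) * volume (Ioo s t) := by
          rw [setLIntegral_const]
      _ ≤ (K : ENNReal) * volume (Ioc s t) := by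
          gcongr
          exact Ioo_subset_Ioc_self
  rw [StieltjesFunction.measure_Ioc, hfG, hfG, Real.volume_Ioc,
    ← ENNReal.ofReal_coe_nnreal, ← ENNReal.ofReal_mul K.coe_nonneg] at hint
  have hfin : G t - G s ≤ (K : ℝ) * (t - s) :=
    (ENNReal.ofReal_le_ofReal_iff (by nlinarith [K.coe_nonneg])).1 hint
  simp only [hGdef] at hfin
  linarith

private lemma lip_deriv_nonneg {K : NNReal} {H : ℝ → ℝ} (hH : LipschitzWith K H)
    {s t : ℝ} (hst : s ≤ t)
    (hd : ∀ᵐ x ∂(volume.restrict (Ioo s t)), 0 ≤ deriv H x) :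
    H s ≤ H t := by
  have hneg : LipschitzWith K (fun x => -H x) := hH.neg
  have := lip_deriv_nonpos hneg hst (by
    filter_upwards [hd] with x hx
    rw [deriv.fun_neg]
    linarith)
  simpa using this

private lemma lipOn_deriv_nonpos {ℓ : ℝ} {K : NNReal} {F : ℝ → ℝ}
    (hF : LipschitzOnWith K F (Icc 0 ℓ)) {s t : ℝ} (hs : s ∈ Icc 0 ℓ) (ht : t ∈ Icc 0 ℓ)
    (hst : s ≤ t) (hd : ∀ᵐ x ∂(volume.restrict (Ioo s t)), deriv F x ≤ 0) : F t ≤ F s := by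
  obtain ⟨H, hH, hHeq⟩ := hF.extend_real
  have hderiv_eq : ∀ x ∈ Ioo s t, deriv H x = deriv F x := by
    intro x hx
    have hmem : Icc 0 ℓ ∈ nhds x :=
      Icc_mem_nhds (lt_of_le_of_lt hs.1 hx.1) (lt_of_lt_of_le hx.2 ht.2)
    exact Filter.EventuallyEq.deriv_eq
      (Filter.eventuallyEq_of_mem hmem fun y hy => (hHeq hy).symm)
  have h := lip_deriv_nonpos hH hst (by
    filter_upwards [hd, ae_restrict_mem measurableSet_Ioo] with x h1 h2
    rw [hderiv_eq x h2]; exact h1)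
  calc F t = H t := hHeq ht
    _ ≤ H s := h
    _ = F s := (hHeq hs).symm

private lemma lipOn_deriv_nonneg {ℓ : ℝ} {K : NNReal} {F : ℝ → ℝ}
    (hF : LipschitzOnWith K F (Icc 0 ℓ)) {s t : ℝ} (hs : s ∈ Icc 0 ℓ) (ht : t ∈ Icc 0 ℓ)
    (hst : s ≤ t) (hd : ∀ᵐ x ∂(volume.restrict (Ioo s t)), 0 ≤ deriv F x) : F s ≤ F t := by
  obtain ⟨H, hH, hHeq⟩ := hF.extend_real
  have hderiv_eq : ∀ x ∈ Ioo s t, deriv H x = deriv F x := by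
    intro x hx
    have hmem : Icc 0 ℓ ∈ nhds x :=
      Icc_mem_nhds (lt_of_le_of_lt hs.1 hx.1) (lt_of_lt_of_le hx.2 ht.2)
    exact Filter.EventuallyEq.deriv_eq
      (Filter.eventuallyEq_of_mem hmem fun y hy => (hHeq hy).symm)
  have h := lip_deriv_nonneg hH hst (by
    filter_upwards [hd, ae_restrict_mem measurableSet_Ioo] with x h1 h2
    rw [hderiv_eq x h2]; exact h1)
  calc F s = H s := hHeq hs
    _ ≤ H t := h
    _ = F t := (hHeq ht).symm

/-- An admissible radius: Lipschitz on `[0, ℓ]` and bounded below by `a0`. -/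
def IsAdmissible (ℓ a0 : ℝ) (a : ℝ → ℝ) : Prop :=
  (∃ K : NNReal, LipschitzOnWith K a (Set.Icc 0 ℓ)) ∧ ∀ x ∈ Set.Icc 0 ℓ, a0 ≤ a x

/-- A temperature profile for the radius `a`: `T` is `C¹` on `[0, ℓ]` with derivative `T'`,
`x ↦ a(x)² T'(x)` is Lipschitz, the Sturm–Liouville equation
`(a²T')' = β a √(1+a'²) (T − T∞)` holds a.e. on `(0, ℓ)`, and the boundary conditions
`T(0) = Td`, `T'(ℓ) = −βr (T(ℓ) − T∞)` hold. -/
def IsTempProfile (ℓ β βr Tinf Td : ℝ) (a T T' : ℝ → ℝ) : Prop :=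
  ContinuousOn T' (Set.Icc 0 ℓ) ∧
  (∀ x ∈ Set.Icc 0 ℓ, HasDerivWithinAt T (T' x) (Set.Icc 0 ℓ) x) ∧
  (∃ K : NNReal, LipschitzOnWith K (fun x => (a x) ^ 2 * T' x) (Set.Icc 0 ℓ)) ∧
  (∀ᵐ x ∂(MeasureTheory.volume.restrict (Set.Ioo 0 ℓ)),
      deriv (fun y => (a y) ^ 2 * T' y) x
        = β * (a x * Real.sqrt (1 + (deriv a x) ^ 2)) * (T x - Tinf)) ∧
  T 0 = Td ∧ T' ℓ = -βr * (T ℓ - Tinf)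

/-- The temperature along the fin is nonincreasing and lies between the fluid temperature
`T∞` and the inlet temperature `Td`. -/
theorem temperature_monotone_and_bounded
    (ℓ a0 β βr Tinf Td : ℝ) (hℓ : 0 < ℓ) (ha0 : 0 < a0) (hβ : 0 < β) (hβr : 0 ≤ βr)
    (hTinf : 0 < Tinf) (hTd : Tinf < Td)
    (a T T' : ℝ → ℝ) (ha : IsAdmissible ℓ a0 a)
    (hT : IsTempProfile ℓ β βr Tinf Td a T T') :
    AntitoneOn T (Set.Icc 0 ℓ) ∧ ∀ x ∈ Set.Icc 0 ℓ, Tinf ≤ T x ∧ T x ≤ Td := by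
  obtain ⟨-, ha0'⟩ := ha
  obtain ⟨hT'cont, hTderiv, ⟨K, hFlip⟩, hode, hT0, hTl⟩ := hT
  set F : ℝ → ℝ := fun x => (a x) ^ 2 * T' x with hFdef
  have haPos : ∀ x ∈ Icc 0 ℓ, 0 < a x := fun x hx => lt_of_lt_of_le ha0 (ha0' x hx)
  have hTcont : ContinuousOn T (Icc 0 ℓ) := fun x hx => (hTderiv x hx).continuousWithinAt
  have hTderivAt : ∀ x ∈ Ioo 0 ℓ, HasDerivAt T (T' x) x := fun x hx =>
    (hTderiv x (Ioo_subset_Icc_self hx)).hasDerivAt (Icc_mem_nhds hx.1 hx.2)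
  -- Step 1: `T ≥ Tinf` on `[0, ℓ]`.
  have hlow : ∀ x ∈ Icc 0 ℓ, Tinf ≤ T x := by
    by_contra hcon
    push_neg at hcon
    obtain ⟨x₀, hx₀, hx₀lt⟩ := hcon
    obtain ⟨c, hc, hmin⟩ := isCompact_Icc.exists_isMinOn (nonempty_Icc.2 hℓ.le) hTcont
    have hminle : ∀ y ∈ Icc 0 ℓ, T c ≤ T y := fun y hy => isMinOn_iff.1 hmin y hy
    have hTc : T c < Tinf := lt_of_le_of_lt (hminle x₀ hx₀) hx₀lt
    have hc0 : 0 < c := by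
      rcases eq_or_lt_of_le hc.1 with h | h
      · exfalso
        rw [← h, hT0] at hTc
        linarith
      · exact h
    -- at the minimum point the flux `F c` is nonnegative
    have hFc : 0 ≤ F c := by
      rcases eq_or_lt_of_le hc.2 with hcl | hcl
      · have h1 : T ℓ - Tinf < 0 := by rw [← hcl]; linarith
        have h2 : 0 ≤ T' ℓ := by rw [hTl]; nlinarith
        rw [hcl]
        exact mul_nonneg (sq_nonneg _) h2
      · have hcI : c ∈ Ioo 0 ℓ := ⟨hc0, hcl⟩
        have hloc : IsLocalMin T c := hmin.isLocalMin (Icc_mem_nhds hc0 hcl)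
        have h0 : T' c = 0 := hloc.hasDerivAt_eq_zero (hTderivAt c hcI)
        simp [hFdef, h0]
    -- the last point `b` before `c` where `T = Tinf`
    set Z := {x | x ∈ Icc 0 c ∧ T x = Tinf} with hZdef
    have hsub : Icc 0 c ⊆ Icc 0 ℓ := Icc_subset_Icc le_rfl hc.2
    have hZne : Z.Nonempty := by
      obtain ⟨b₀, hb₀, hTb₀⟩ := intermediate_value_Icc' hc.1 (hTcont.mono hsub)
        ⟨hTc.le, by rw [hT0]; exact hTd.le⟩
      exact ⟨b₀, hb₀, hTb₀⟩
    have hZclosed : IsClosed Z := by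
      have hZeq : Z = Icc 0 c ∩ T ⁻¹' {Tinf} := by
        ext x; simp [hZdef]
      rw [hZeq]
      exact ContinuousOn.preimage_isClosed_of_isClosed (hTcont.mono hsub)
        isClosed_Icc isClosed_singleton
    have hZcomp : IsCompact Z := isCompact_Icc.of_isClosed_subset hZclosed fun x hx => hx.1
    set b := sSup Z with hbdef
    have hbZ : b ∈ Z := hZcomp.sSup_mem hZne
    have hbc : b < c := lt_of_le_of_ne hbZ.1.2 (by
      intro h
      rw [h] at hbZ
      exact absurd hbZ.2 (ne_of_lt hTc))
    have hb0 : 0 ≤ b := hbZ.1.1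
    have hneg : ∀ x ∈ Ioc b c, T x < Tinf := by
      intro x hx
      by_contra hge
      push_neg at hge
      have h0x : (0:ℝ) ≤ x := le_trans hb0 hx.1.le
      obtain ⟨z, hz, hTz⟩ := intermediate_value_Icc' hx.2
        (hTcont.mono (Icc_subset_Icc h0x hc.2)) ⟨hTc.le, hge⟩
      have hzZ : z ∈ Z := ⟨⟨le_trans h0x hz.1, hz.2⟩, hTz⟩
      have hzb : z ≤ b := le_csSup hZcomp.bddAbove hzZ
      have := hx.1
      have := hz.1
      linarith
    -- mean value theorem: a point with negative flux
    have hsub2 : Icc b c ⊆ Icc 0 ℓ := Icc_subset_Icc hb0 hc.2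
    obtain ⟨ξ, hξ, hξslope⟩ := exists_hasDerivAt_eq_slope T T' hbc (hTcont.mono hsub2)
      (fun x hx => hTderivAt x ⟨lt_of_le_of_lt hb0 hx.1, lt_of_lt_of_le hx.2 hc.2⟩)
    have hξI : ξ ∈ Icc 0 ℓ := hsub2 (Ioo_subset_Icc_self hξ)
    have hT'ξ : T' ξ < 0 := by
      rw [hξslope]
      apply div_neg_of_neg_of_pos
      · have := hbZ.2; linarith
      · linarith [hbc]
    have hFξ : F ξ < 0 := mul_neg_of_pos_of_neg (pow_pos (haPos ξ hξI) 2) hT'ξ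
    have hsubI : Ioo ξ c ⊆ Ioo 0 ℓ := fun x hx =>
      ⟨lt_of_le_of_lt hb0 (lt_trans hξ.1 hx.1), lt_of_lt_of_le hx.2 hc.2⟩
    have hae : ∀ᵐ x ∂(volume.restrict (Ioo ξ c)), deriv F x ≤ 0 := by
      filter_upwards [ae_restrict_of_ae_restrict_of_subset hsubI hode,
        ae_restrict_mem measurableSet_Ioo] with x hx1 hx2
      rw [hx1]
      have hxI : x ∈ Icc 0 ℓ := Ioo_subset_Icc_self (hsubI hx2)
      have hTx : T x - Tinf < 0 := by
        have := hneg x ⟨lt_trans hξ.1 hx2.1, hx2.2.le⟩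
        linarith
      have hax : 0 < a x := haPos x hxI
      have hsq : 0 < Real.sqrt (1 + (deriv a x) ^ 2) := Real.sqrt_pos.2 (by positivity)
      have hpos : 0 < β * (a x * Real.sqrt (1 + (deriv a x) ^ 2)) :=
        mul_pos hβ (mul_pos hax hsq)
      nlinarith
    have hFcle : F c ≤ F ξ := lipOn_deriv_nonpos hFlip hξI hc hξ.2.le hae
    linarith
  -- Step 2: the flux is nondecreasing, hence `T' ≤ 0`.
  have haeF : ∀ᵐ x ∂(volume.restrict (Ioo 0 ℓ)), 0 ≤ deriv F x := by
    filter_upwards [hode, ae_restrict_mem measurableSet_Ioo] with x h1 h2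
    rw [h1]
    have hxI : x ∈ Icc 0 ℓ := Ioo_subset_Icc_self h2
    have h3 := hlow x hxI
    have hax := haPos x hxI
    have hsq : (0:ℝ) ≤ Real.sqrt (1 + (deriv a x) ^ 2) := Real.sqrt_nonneg _
    have := mul_nonneg (mul_nonneg hβ.le (mul_nonneg hax.le hsq)) (by linarith : 0 ≤ T x - Tinf)
    linarith
  have hℓI : (ℓ : ℝ) ∈ Icc (0:ℝ) ℓ := right_mem_Icc.2 hℓ.le
  have hFle : ∀ x ∈ Icc 0 ℓ, F x ≤ F ℓ := by
    intro x hx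
    exact lipOn_deriv_nonneg hFlip hx hℓI hx.2
      (ae_restrict_of_ae_restrict_of_subset (Ioo_subset_Ioo hx.1 le_rfl) haeF)
  have hFl : F ℓ ≤ 0 := by
    have h1 : 0 ≤ T ℓ - Tinf := by have := hlow ℓ hℓI; linarith
    have h2 : T' ℓ ≤ 0 := by rw [hTl]; nlinarith
    have := mul_nonneg (sq_nonneg (a ℓ)) (neg_nonneg.2 h2)
    simp only [hFdef]
    nlinarith
  have hT'le : ∀ x ∈ Icc 0 ℓ, T' x ≤ 0 := by
    intro x hx
    have hFx : F x ≤ 0 := le_trans (hFle x hx) hFl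
    by_contra hpos
    push_neg at hpos
    have : 0 < F x := mul_pos (pow_pos (haPos x hx) 2) hpos
    linarith
  have hanti : AntitoneOn T (Icc 0 ℓ) := by
    apply antitoneOn_of_deriv_nonpos (convex_Icc 0 ℓ) hTcont
    · intro x hx
      rw [interior_Icc] at hx
      exact (hTderivAt x hx).differentiableAt.differentiableWithinAt
    · intro x hx
      rw [interior_Icc] at hx
      rw [(hTderivAt x hx).deriv]
      exact hT'le x (Ioo_subset_Icc_self hx)
  refine ⟨hanti, fun x hx => ⟨hlow x hx, ?_⟩⟩
  have h := hanti (left_mem_Icc.2 hℓ.le) hx hx.1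
  rw [hT0] at h
  exact h
end
end

section
/- Let T be a temperature profile for an admissible radius a, where a is moreover C¹ on [0,ℓ]. Define y(x) = ∫₀ˣ dt/a(t)², ℓ₁ = y(ℓ), and S : [0,ℓ₁] → ℝ by S(y(x)) = T(x) − T∞ (y is a C¹ increasing bijection from [0,ℓ] onto [0,ℓ₁]). Then S is C¹ with S' Lipschitz, and S satisfies S''(y(x)) = β a(x)³√(1+a'(x)²) S(y(x)) for a.e. x ∈ (0,ℓ), with S(0) = Td − T∞ and S'(ℓ₁) = −βr a(ℓ)² S(ℓ₁). -/
open MeasureTheory Set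
open Filter Topology

noncomputable section

/-- The standard change of variables `y(x) = ∫₀ˣ dt/a(t)²` transforms the fin equation into
`S'' (y(x)) = β a(x)³ √(1+a'(x)²) S(y(x))` with `S(0) = Td − T∞`,
`S'(ℓ₁) = −βr a(ℓ)² S(ℓ₁)`; moreover `y` is an increasing bijection from `[0,ℓ]`
onto `[0,ℓ₁]` and `S` is `C¹` with Lipschitz derivative. -/
theorem change_of_variables_sturm_liouville
    (ℓ a0 β βr Tinf Td : ℝ) (hℓ : 0 < ℓ) (ha0 : 0 < a0) (hβ : 0 < β) (hβr : 0 ≤ βr)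
    (hTinf : 0 < Tinf) (hTd : Tinf < Td)
    (a a' T T' : ℝ → ℝ) (ha : IsAdmissible ℓ a0 a)
    (ha'cont : ContinuousOn a' (Set.Icc 0 ℓ))
    (ha'deriv : ∀ x ∈ Set.Icc 0 ℓ, HasDerivWithinAt a (a' x) (Set.Icc 0 ℓ) x)
    (hT : IsTempProfile ℓ β βr Tinf Td a T T')
    (y : ℝ → ℝ) (hy : ∀ x, y x = ∫ t in (0:ℝ)..x, 1 / (a t) ^ 2)
    (ℓ₁ : ℝ) (hℓ₁ : ℓ₁ = y ℓ)
    (S : ℝ → ℝ) (hS : ∀ x ∈ Set.Icc 0 ℓ, S (y x) = T x - Tinf) :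
    StrictMonoOn y (Set.Icc 0 ℓ) ∧
    (∀ x ∈ Set.Icc 0 ℓ, ContinuousWithinAt y (Set.Icc 0 ℓ) x ∧
        HasDerivWithinAt y (1 / (a x) ^ 2) (Set.Icc 0 ℓ) x) ∧
    y '' Set.Icc 0 ℓ = Set.Icc 0 ℓ₁ ∧
    ∃ S' : ℝ → ℝ,
      ContinuousOn S' (Set.Icc 0 ℓ₁) ∧
      (∀ u ∈ Set.Icc 0 ℓ₁, HasDerivWithinAt S (S' u) (Set.Icc 0 ℓ₁) u) ∧
      (∃ K : NNReal, LipschitzOnWith K S' (Set.Icc 0 ℓ₁)) ∧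
      (∀ᵐ x ∂(MeasureTheory.volume.restrict (Set.Ioo 0 ℓ)),
          deriv S' (y x)
            = β * (a x) ^ 3 * Real.sqrt (1 + (deriv a x) ^ 2) * S (y x)) ∧
      S 0 = Td - Tinf ∧ S' ℓ₁ = -(βr * (a ℓ) ^ 2) * S ℓ₁ := by
  obtain ⟨⟨Ka, haLip⟩, halb⟩ := ha
  obtain ⟨hT'cont, hTderiv, ⟨Kg, hgLip⟩, hODE, hT0, hTℓ⟩ := hT
  set g : ℝ → ℝ := fun x => (a x) ^ 2 * T' x with hgdef
  have haCont : ContinuousOn a (Set.Icc 0 ℓ) := haLip.continuousOn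
  have hapos : ∀ x ∈ Set.Icc 0 ℓ, 0 < a x := fun x hx => lt_of_lt_of_le ha0 (halb x hx)
  obtain ⟨z, hz, hzmax'⟩ := isCompact_Icc.exists_isMaxOn ⟨0, Set.left_mem_Icc.2 hℓ.le⟩ haCont
  set A : ℝ := a z with hA
  have hzmax : ∀ t ∈ Set.Icc 0 ℓ, a t ≤ A := fun t ht => hzmax' ht
  have hApos : 0 < A := hapos z hz
  have hfc : ContinuousOn (fun t => 1 / (a t) ^ 2) (Set.Icc 0 ℓ) :=
    continuousOn_const.div (haCont.pow 2)
      (fun x hx => pow_ne_zero _ (ne_of_gt (hapos x hx)))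
  have hy0 : y 0 = 0 := by rw [hy]; simp
  have hII : ∀ x₁ ∈ Set.Icc 0 ℓ, ∀ x₂ ∈ Set.Icc 0 ℓ,
      IntervalIntegrable (fun t => 1 / (a t) ^ 2) volume x₁ x₂ := fun x₁ h₁ x₂ h₂ =>
    (hfc.mono (Set.uIcc_subset_Icc h₁ h₂)).intervalIntegrable
  -- increment lower bound
  have hincr : ∀ x₁ ∈ Set.Icc 0 ℓ, ∀ x₂ ∈ Set.Icc 0 ℓ, x₁ ≤ x₂ →
      (x₂ - x₁) / A ^ 2 ≤ y x₂ - y x₁ := by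
    intro x₁ h₁ x₂ h₂ h12
    have h0 : (0:ℝ) ∈ Set.Icc 0 ℓ := Set.left_mem_Icc.2 hℓ.le
    have hdiff : y x₂ - y x₁ = ∫ t in x₁..x₂, 1 / (a t) ^ 2 := by
      rw [hy, hy]
      exact intervalIntegral.integral_interval_sub_left (hII 0 h0 x₂ h₂) (hII 0 h0 x₁ h₁)
    have hmono : (x₂ - x₁) * (1 / A ^ 2) ≤ ∫ t in x₁..x₂, 1 / (a t) ^ 2 := by
      have hc : (∫ _ in x₁..x₂, 1 / A ^ 2) = (x₂ - x₁) * (1 / A ^ 2) := by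
        rw [intervalIntegral.integral_const]; simp [smul_eq_mul]
      rw [← hc]
      refine intervalIntegral.integral_mono_on h12 (intervalIntegrable_const)
        (hII x₁ h₁ x₂ h₂) ?_
      intro t ht
      have ht' : t ∈ Set.Icc 0 ℓ := Set.Icc_subset_Icc h₁.1 h₂.2 ht
      have h1 : 0 < a t := hapos t ht'
      have h2 : a t ≤ A := hzmax t ht'
      have := pow_le_pow_left₀ h1.le h2 2
      exact one_div_le_one_div_of_le (by positivity) this
    calc (x₂ - x₁) / A ^ 2 = (x₂ - x₁) * (1 / A ^ 2) := by ring
      _ ≤ ∫ t in x₁..x₂, 1 / (a t) ^ 2 := hmono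
      _ = y x₂ - y x₁ := hdiff.symm
  have hmonoy : StrictMonoOn y (Set.Icc 0 ℓ) := by
    intro x₁ h₁ x₂ h₂ h12
    have := hincr x₁ h₁ x₂ h₂ h12.le
    have hpos : 0 < (x₂ - x₁) / A ^ 2 := div_pos (by linarith) (by positivity)
    linarith
  -- derivatives of y
  have hyderiv : ∀ x ∈ Set.Icc 0 ℓ, HasDerivWithinAt y (1 / (a x) ^ 2) (Set.Icc 0 ℓ) x := by
    intro x hx
    haveI : Fact (x ∈ Set.Icc 0 ℓ) := ⟨hx⟩
    have := intervalIntegral.integral_hasDerivWithinAt_right (f := fun t => 1 / (a t) ^ 2)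
      (s := Set.Icc 0 ℓ) (t := Set.Icc 0 ℓ)
      (hII 0 (Set.left_mem_Icc.2 hℓ.le) x hx)
      (hfc.stronglyMeasurableAtFilter_nhdsWithin measurableSet_Icc x) (hfc x hx)
    exact HasDerivWithinAt.congr this (fun z _ => hy z) (hy x)
  have hycont : ContinuousOn y (Set.Icc 0 ℓ) :=
    fun x hx => (hyderiv x hx).continuousWithinAt
  -- image
  have hyℓpos : 0 < ℓ₁ := by
    have h1 := hincr 0 (Set.left_mem_Icc.2 hℓ.le) ℓ (Set.right_mem_Icc.2 hℓ.le) hℓ.le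
    rw [hy0] at h1; rw [hℓ₁]
    have h2 : 0 < (ℓ - 0) / A ^ 2 := div_pos (by linarith) (by positivity)
    linarith
  have himage : y '' Set.Icc 0 ℓ = Set.Icc 0 ℓ₁ := by
    apply Set.Subset.antisymm
    · rintro _ ⟨x, hx, rfl⟩
      constructor
      · have h1 := hincr 0 (Set.left_mem_Icc.2 hℓ.le) x hx hx.1
        rw [hy0] at h1
        have h2 : 0 ≤ (x - 0) / A ^ 2 := div_nonneg (by linarith [hx.1]) (by positivity)
        linarith
      · rw [hℓ₁]
        rcases eq_or_lt_of_le hx.2 with h | h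
        · rw [h]
        · exact (hmonoy hx (Set.right_mem_Icc.2 hℓ.le) h).le
    · have := intermediate_value_Icc hℓ.le hycont
      rw [hy0, ← hℓ₁] at this
      exact this
  -- the inverse function
  set φ : ℝ → ℝ := Function.invFunOn y (Set.Icc 0 ℓ) with hφdef
  have hyinj : Set.InjOn y (Set.Icc 0 ℓ) := hmonoy.injOn
  have hφleft : ∀ x ∈ Set.Icc 0 ℓ, φ (y x) = x := fun x hx =>
    hyinj.leftInvOn_invFunOn hx
  have hφmem : ∀ u ∈ Set.Icc 0 ℓ₁, φ u ∈ Set.Icc 0 ℓ := by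
    intro u hu
    rw [← himage] at hu
    obtain ⟨x, hx, rfl⟩ := hu
    exact Function.invFunOn_mem ⟨x, hx, rfl⟩
  have hφeq : ∀ u ∈ Set.Icc 0 ℓ₁, y (φ u) = u := by
    intro u hu
    rw [← himage] at hu
    obtain ⟨x, hx, rfl⟩ := hu
    exact Function.invFunOn_eq ⟨x, hx, rfl⟩
  -- φ is Lipschitz with constant A^2
  have hφmono : ∀ u ∈ Set.Icc 0 ℓ₁, ∀ v ∈ Set.Icc 0 ℓ₁, u ≤ v → φ u ≤ φ v := by
    intro u hu v hv huv
    by_contra h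
    push_neg at h
    have := hmonoy (hφmem v hv) (hφmem u hu) h
    rw [hφeq u hu, hφeq v hv] at this
    linarith
  have hφlipR : ∀ u ∈ Set.Icc 0 ℓ₁, ∀ v ∈ Set.Icc 0 ℓ₁, u ≤ v →
      φ v - φ u ≤ A ^ 2 * (v - u) := by
    intro u hu v hv huv
    have hmon : φ u ≤ φ v := hφmono u hu v hv huv
    have h1 := hincr (φ u) (hφmem u hu) (φ v) (hφmem v hv) hmon
    rw [hφeq u hu, hφeq v hv] at h1
    have hA2 : 0 < A ^ 2 := by positivity
    rw [div_le_iff₀ hA2] at h1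
    linarith
  have hφlip : LipschitzOnWith (Real.toNNReal (A ^ 2)) φ (Set.Icc 0 ℓ₁) := by
    rw [lipschitzOnWith_iff_dist_le_mul]
    intro u hu v hv
    rw [Real.dist_eq, Real.dist_eq, Real.coe_toNNReal _ (by positivity)]
    rcases le_total u v with h | h
    · have h1 := hφlipR u hu v hv h
      have h2 : φ u ≤ φ v := hφmono u hu v hv h
      rw [abs_of_nonpos (by linarith : φ u - φ v ≤ 0), abs_of_nonpos (by linarith : u - v ≤ 0)]
      nlinarith
    · have h1 := hφlipR v hv u hu h
      have h2 : φ v ≤ φ u := hφmono v hv u hu h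
      rw [abs_of_nonneg (by linarith : (0:ℝ) ≤ φ u - φ v), abs_of_nonneg (by linarith : (0:ℝ) ≤ u - v)]
      nlinarith
  have hφcont : ContinuousOn φ (Set.Icc 0 ℓ₁) := hφlip.continuousOn
  -- the derivative S'
  set S' : ℝ → ℝ := fun u => g (φ u) with hS'def
  have hgcont : ContinuousOn g (Set.Icc 0 ℓ) := (haCont.pow 2).mul hT'cont
  have hS'cont : ContinuousOn S' (Set.Icc 0 ℓ₁) := hgcont.comp hφcont hφmem
  -- S equals T ∘ φ - Tinf on [0, ℓ₁]
  have hSval : ∀ u ∈ Set.Icc 0 ℓ₁, S u = T (φ u) - Tinf := by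
    intro u hu
    have := hS (φ u) (hφmem u hu)
    rw [hφeq u hu] at this
    exact this
  -- HasDerivWithinAt S
  have hSderiv : ∀ u ∈ Set.Icc 0 ℓ₁, HasDerivWithinAt S (S' u) (Set.Icc 0 ℓ₁) u := by
    intro u hu
    set x : ℝ := φ u with hxdef
    have hx : x ∈ Set.Icc 0 ℓ := hφmem u hu
    have hyx : y x = u := hφeq u hu
    have htT : Tendsto (slope T x) (𝓝[Set.Icc 0 ℓ \ {x}] x) (𝓝 (T' x)) :=
      hasDerivWithinAt_iff_tendsto_slope.mp (hTderiv x hx)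
    have hty : Tendsto (slope y x) (𝓝[Set.Icc 0 ℓ \ {x}] x) (𝓝 (1 / (a x) ^ 2)) :=
      hasDerivWithinAt_iff_tendsto_slope.mp (hyderiv x hx)
    have hφtend : Tendsto φ (𝓝[Set.Icc 0 ℓ₁ \ {u}] u) (𝓝[Set.Icc 0 ℓ \ {x}] x) := by
      rw [tendsto_nhdsWithin_iff]
      constructor
      · have h1 : ContinuousWithinAt φ (Set.Icc 0 ℓ₁) u := hφcont u hu
        exact h1.tendsto.mono_left (nhdsWithin_mono u Set.diff_subset)
          |>.congr (fun _ => rfl) |>.mono_left le_rfl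
      · filter_upwards [self_mem_nhdsWithin] with v hv
        refine ⟨hφmem v hv.1, ?_⟩
        intro hemp
        apply hv.2
        have : y (φ v) = y x := by rw [hemp]
        rw [hφeq v hv.1, hyx] at this
        simp [this]
    have hslope_eq : ∀ v ∈ Set.Icc 0 ℓ₁ \ {u},
        slope S u v = slope T x (φ v) / slope y x (φ v) := by
      intro v hv
      have hv1 : v ∈ Set.Icc 0 ℓ₁ := hv.1
      have hvne : v ≠ u := hv.2
      have hφvne : φ v ≠ x := by
        intro h
        apply hvne
        have : y (φ v) = y x := by rw [h]
        rwa [hφeq v hv1, hyx] at this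
      have h1 : S v = T (φ v) - Tinf := hSval v hv1
      have h2 : S u = T x - Tinf := hSval u hu
      have h3 : y (φ v) = v := hφeq v hv1
      have hd1 : φ v - x ≠ 0 := sub_ne_zero.2 hφvne
      have hd3 : v - u ≠ 0 := sub_ne_zero.2 hvne
      have key : slope y x (φ v) = (v - u) / (φ v - x) := by
        rw [slope_def_field, h3, hyx]
      have key2 : slope T x (φ v) = (T (φ v) - T x) / (φ v - x) := slope_def_field T x (φ v)
      rw [slope_def_field, h1, h2, key, key2, div_div_div_cancel_right₀ hd1]
      congr 1; ring
    have hane : 1 / (a x) ^ 2 ≠ 0 := by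
      have := hapos x hx; positivity
    have hlim : Tendsto (fun v => slope T x (φ v) / slope y x (φ v))
        (𝓝[Set.Icc 0 ℓ₁ \ {u}] u) (𝓝 (T' x / (1 / (a x) ^ 2))) :=
      (htT.comp hφtend).div (hty.comp hφtend) hane
    have hconst : T' x / (1 / (a x) ^ 2) = S' u := by
      rw [hS'def]
      simp only [hgdef]
      rw [div_div_eq_mul_div, div_one, ← hxdef]
      ring
    rw [hasDerivWithinAt_iff_tendsto_slope]
    rw [← hconst]
    exact hlim.congr' (by filter_upwards [self_mem_nhdsWithin] with v hv
      using (hslope_eq v hv).symm)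
  -- Lipschitz of S'
  have hS'lip : LipschitzOnWith (Kg * Real.toNNReal (A ^ 2)) S' (Set.Icc 0 ℓ₁) :=
    hgLip.comp hφlip hφmem
  -- a.e. second derivative
  obtain ⟨gext, hgextlip, hagree⟩ := hgLip.extend_real
  have hrad : ∀ᵐ x ∂(volume : Measure ℝ), DifferentiableAt ℝ gext x :=
    hgextlip.ae_differentiableAt
  have hae : ∀ᵐ x ∂(MeasureTheory.volume.restrict (Set.Ioo 0 ℓ)),
      deriv S' (y x) = β * (a x) ^ 3 * Real.sqrt (1 + (deriv a x) ^ 2) * S (y x) := by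
    filter_upwards [hODE, ae_restrict_of_ae hrad, ae_restrict_mem measurableSet_Ioo]
      with x hode hdiff hmem
    have hxIcc : x ∈ Set.Icc 0 ℓ := Set.Ioo_subset_Icc_self hmem
    have hloc : g =ᶠ[𝓝 x] gext :=
      eventually_of_mem (Ioo_mem_nhds hmem.1 hmem.2)
        (fun z hz => hagree (Set.Ioo_subset_Icc_self hz))
    have hgdiff : DifferentiableAt ℝ g x := hloc.differentiableAt_iff.mpr hdiff
    have hgd : HasDerivAt g (deriv g x) x := hgdiff.hasDerivAt
    have hyIoo : y x ∈ Set.Ioo 0 ℓ₁ := by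
      constructor
      · have := hmonoy (Set.left_mem_Icc.2 hℓ.le) hxIcc hmem.1
        rwa [hy0] at this
      · rw [hℓ₁]
        exact hmonoy hxIcc (Set.right_mem_Icc.2 hℓ.le) hmem.2
    have hφx : φ (y x) = x := hφleft x hxIcc
    have hφcontat : ContinuousAt φ (y x) :=
      hφcont.continuousAt (Icc_mem_nhds hyIoo.1 hyIoo.2)
    have hyd : HasDerivAt y (1 / (a x) ^ 2) x :=
      (hyderiv x hxIcc).hasDerivAt (Icc_mem_nhds hmem.1 hmem.2)
    have hane : 1 / (a x) ^ 2 ≠ 0 := by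
      have := hapos x hxIcc; positivity
    have hfg : ∀ᶠ v in 𝓝 (y x), y (φ v) = v :=
      eventually_of_mem (Ioo_mem_nhds hyIoo.1 hyIoo.2)
        (fun v hv => hφeq v (Set.Ioo_subset_Icc_self hv))
    have hφd : HasDerivAt φ (1 / (a x) ^ 2)⁻¹ (y x) :=
      HasDerivAt.of_local_left_inverse hφcontat (by rwa [hφx]) hane hfg
    have hφd' : HasDerivAt φ ((a x) ^ 2) (y x) := by
      rwa [one_div, inv_inv] at hφd
    have hcomp : HasDerivAt S' (deriv g x * (a x) ^ 2) (y x) := by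
      have := HasDerivAt.comp (y x) (by rwa [hφx] : HasDerivAt g (deriv g x) (φ (y x))) hφd'
      exact this
    rw [hcomp.deriv]
    rw [hode]
    have hSx : T x - Tinf = S (y x) := (hS x hxIcc).symm
    rw [hSx]
    ring
  -- boundary values
  have hS0 : S 0 = Td - Tinf := by
    have := hS 0 (Set.left_mem_Icc.2 hℓ.le)
    rw [hy0, hT0] at this
    exact this
  have hS'ℓ₁ : S' ℓ₁ = -(βr * (a ℓ) ^ 2) * S ℓ₁ := by
    have hφℓ : φ ℓ₁ = ℓ := by
      rw [hℓ₁]; exact hφleft ℓ (Set.right_mem_Icc.2 hℓ.le)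
    have hSℓ : S ℓ₁ = T ℓ - Tinf := by
      rw [hℓ₁]; exact hS ℓ (Set.right_mem_Icc.2 hℓ.le)
    rw [hS'def]
    simp only [hgdef]
    rw [hφℓ, hTℓ, hSℓ]
    ring
  exact ⟨hmonoy, fun x hx => ⟨(hyderiv x hx).continuousWithinAt, hyderiv x hx⟩, himage,
    S', hS'cont, hSderiv, ⟨Kg * Real.toNNReal (A ^ 2), hS'lip⟩, hae, hS0, hS'ℓ₁⟩
end
end

section
/- Let T be a temperature profile for an admissible radius a. Then T is strictly decreasing on [0,ℓ]; in particular T(x) < Td for every x ∈ (0,ℓ]. -/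
open MeasureTheory Set Filter Topology intervalIntegral

noncomputable section

lemma slope_seq' {g : ℝ → ℝ} {y d : ℝ} (hg : HasDerivAt g d y) :
    Filter.Tendsto (fun n : ℕ => (g (y + 1/(n+1)) - g y) / (1/(n+1))) atTop (𝓝 d) := by
  have h0 : Filter.Tendsto (fun n : ℕ => (1:ℝ)/(n+1)) atTop (𝓝 0) :=
    tendsto_one_div_add_atTop_nhds_zero_nat
  have h1 : Filter.Tendsto (fun n : ℕ => y + 1/(n+1)) atTop (𝓝[≠] y) := by
    apply tendsto_nhdsWithin_of_tendsto_nhds_of_eventually_within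
    · simpa using tendsto_const_nhds.add h0
    · filter_upwards with n
      have : (0:ℝ) < 1/(n+1) := by positivity
      simp only [mem_compl_iff, mem_singleton_iff]
      intro h
      nlinarith [h]
  have := (hasDerivAt_iff_tendsto_slope.1 hg).comp h1
  refine this.congr fun n => ?_
  simp [slope_def_field]

lemma lipschitz_ftc' {K : NNReal} {f : ℝ → ℝ} (hf : LipschitzWith K f) (s t : ℝ) :
    f t - f s = ∫ x in s..t, deriv f x := by
  have hc : Continuous f := hf.continuous
  have hintf : ∀ u v : ℝ, IntervalIntegrable f volume u v := fun u v => hc.intervalIntegrable u v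
  set F : ℕ → ℝ → ℝ := fun n x => (f (x + 1/(n+1)) - f x) / (1/(n+1)) with hFdef
  have hpos : ∀ n : ℕ, (0:ℝ) < 1/(n+1) := fun n => by positivity
  set P : ℝ → ℝ := fun y => ∫ x in (0:ℝ)..y, f x with hPdef
  have hP : ∀ y : ℝ, HasDerivAt P (f y) y := fun y =>
    intervalIntegral.integral_hasDerivAt_right (hintf 0 y)
      (hc.stronglyMeasurable.stronglyMeasurableAtFilter) hc.continuousAt
  have hPint : ∀ u v : ℝ, (∫ x in u..v, f x) = P v - P u := by
    intro u v
    have := intervalIntegral.integral_add_adjacent_intervals (hintf 0 u) (hintf u v)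
    simp only [hPdef]
    linarith
  have key : Filter.Tendsto (fun n => ∫ x in s..t, F n x) atTop (𝓝 (f t - f s)) := by
    have hcomp : ∀ n : ℕ, (∫ x in s..t, F n x)
        = ((P (t + 1/(n+1)) - P t) - ((P (s + 1/(n+1)) - P s))) / (1/(n+1)) := by
      intro n
      have h1 : (∫ x in s..t, F n x) = (∫ x in s..t, (f (x + 1/(n+1)) - f x)) / (1/(n+1)) := by
        simp only [hFdef]
        rw [intervalIntegral.integral_div]
      have h2 : (∫ x in s..t, (f (x + 1/(n+1)) - f x))
          = (∫ x in s..t, f (x + 1/(n+1))) - ∫ x in s..t, f x := by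
        apply intervalIntegral.integral_sub
        · exact (hc.comp (continuous_id.add continuous_const)).intervalIntegrable _ _
        · exact hintf s t
      rw [h1, h2, intervalIntegral.integral_comp_add_right, hPint, hPint]
      ring_nf
    simp only [hcomp]
    have := ((slope_seq' (hP t)).sub (slope_seq' (hP s)))
    refine this.congr fun n => ?_
    ring
  have key2 : Filter.Tendsto (fun n => ∫ x in s..t, F n x) atTop
      (𝓝 (∫ x in s..t, deriv f x)) := by
    apply intervalIntegral.tendsto_integral_filter_of_dominated_convergence
      (bound := fun _ => (K:ℝ))
    · filter_upwards with n
      exact (((hc.comp (continuous_id.add continuous_const)).sub hc).div_const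
        _).aestronglyMeasurable.restrict
    · filter_upwards with n
      filter_upwards with x _
      have hd : dist (f (x + 1/(n+1))) (f x) ≤ K * dist (x + 1/(n+1)) x := hf.dist_le_mul _ _
      have hdx : dist (x + 1/(n+1)) x = 1/(n+1) := by
        rw [Real.dist_eq, add_sub_cancel_left]
        exact abs_of_pos (hpos n)
      rw [hdx] at hd
      rw [Real.dist_eq] at hd
      have : ‖F n x‖ = |f (x + 1/(n+1)) - f x| / (1/(n+1)) := by
        simp only [hFdef, Real.norm_eq_abs, abs_div, abs_of_pos (hpos n)]
      rw [this, div_le_iff₀ (hpos n)]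
      linarith
    · exact intervalIntegrable_const
    · have had := hf.ae_differentiableAt_real
      filter_upwards [had] with x hx _
      exact slope_seq' hx.hasDerivAt
  exact tendsto_nhds_unique key key2

set_option maxHeartbeats 2000000 in
/-- The temperature along the fin is strictly decreasing on `[0,ℓ]`;
in particular `T(x) < Td` for every `x ∈ (0,ℓ]`. -/
theorem temperature_strict_decreasing
    (ℓ a0 β βr Tinf Td : ℝ) (hℓ : 0 < ℓ) (ha0 : 0 < a0) (hβ : 0 < β) (hβr : 0 ≤ βr)
    (hTinf : 0 < Tinf) (hTd : Tinf < Td)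
    (a T T' : ℝ → ℝ) (ha : IsAdmissible ℓ a0 a)
    (hT : IsTempProfile ℓ β βr Tinf Td a T T') :
    StrictAntiOn T (Set.Icc 0 ℓ) ∧ ∀ x ∈ Set.Ioc 0 ℓ, T x < Td := by
  obtain ⟨⟨Ka, halip⟩, ha0le⟩ := ha
  obtain ⟨hT'cont, hTderiv, ⟨Kφ, hφlip⟩, hode, hbc0, hbcl⟩ := hT
  obtain ⟨Φ, hΦlip, hΦeq⟩ := hφlip.extend_real
  have hTc : ContinuousOn T (Icc 0 ℓ) := fun x hx => (hTderiv x hx).continuousWithinAt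
  have hapos : ∀ x ∈ Icc 0 ℓ, 0 < a x := fun x hx => lt_of_lt_of_le ha0 (ha0le x hx)
  have hΦφ : ∀ x ∈ Ioo 0 ℓ, deriv (fun y => (a y) ^ 2 * T' y) x = deriv Φ x := by
    intro x hx
    have hmem : Icc 0 ℓ ∈ 𝓝 x := Icc_mem_nhds hx.1 hx.2
    exact Filter.EventuallyEq.deriv_eq (eventuallyEq_of_mem hmem fun y hy => (hΦeq hy))
  have hΦd : ∀ x : ℝ, |deriv Φ x| ≤ (Kφ : ℝ) := by
    intro x
    have := norm_deriv_le_of_lipschitzOn (x₀ := x) univ_mem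
      (hΦlip.lipschitzOnWith (s := univ))
    simpa [Real.norm_eq_abs] using this
  have hΦint : ∀ u v : ℝ, IntervalIntegrable (deriv Φ) volume u v := by
    intro u v
    have hm : Measurable (deriv Φ) := measurable_deriv Φ
    have hgen : ∀ p q : ℝ, IntegrableOn (deriv Φ) (Ioc p q) volume := by
      intro p q
      have hconst : IntegrableOn (fun _ : ℝ => (Kφ : ℝ)) (Ioc p q) volume :=
        integrableOn_const measure_Ioc_lt_top.ne
      refine hconst.mono' hm.aestronglyMeasurable.restrict ?_
      filter_upwards with x
      simpa [Real.norm_eq_abs] using hΦd x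
    exact ⟨hgen u v, hgen v u⟩
  have hne_ae : ∀ p : ℝ, ∀ᵐ x : ℝ, x ≠ p := by
    intro p
    refine ae_iff.2 ?_
    simp only [not_not, setOf_eq_eq_singleton]
    exact measure_singleton p
  have hode' : ∀ᵐ x : ℝ, x ∈ Ioo 0 ℓ →
      deriv Φ x = β * (a x * Real.sqrt (1 + (deriv a x) ^ 2)) * (T x - Tinf) := by
    filter_upwards [(ae_restrict_iff' measurableSet_Ioo).1 hode] with x hx hx'
    rw [← hΦφ x hx']
    exact hx hx'
  have hkey : ∀ s t : ℝ, s ∈ Icc 0 ℓ → t ∈ Icc 0 ℓ →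
      (a t) ^ 2 * T' t - (a s) ^ 2 * T' s = ∫ x in s..t, deriv Φ x := by
    intro s t hs ht
    rw [show (a t) ^ 2 * T' t = Φ t from hΦeq ht, show (a s) ^ 2 * T' s = Φ s from hΦeq hs]
    exact lipschitz_ftc' hΦlip s t
  have engine_le : ∀ s t : ℝ, 0 ≤ s → s ≤ t → t ≤ ℓ → ∀ h : ℝ → ℝ,
      ContinuousOn h (Icc 0 ℓ) →
      (∀ x ∈ Ioo s t, β * (a x * Real.sqrt (1 + (deriv a x) ^ 2)) * (T x - Tinf) ≤ h x) →
      (a t) ^ 2 * T' t - (a s) ^ 2 * T' s ≤ ∫ x in s..t, h x := by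
    intro s t hs hst ht h hhc hb
    rw [hkey s t ⟨hs, hst.trans ht⟩ ⟨hs.trans hst, ht⟩]
    have hhint : IntervalIntegrable h volume s t := by
      refine (hhc.mono ?_).intervalIntegrable
      rw [uIcc_of_le hst]; exact Icc_subset_Icc hs ht
    refine intervalIntegral.integral_mono_ae_restrict hst (hΦint s t) hhint ?_
    refine (ae_restrict_iff' measurableSet_Icc).2 ?_
    filter_upwards [hode', hne_ae s, hne_ae t] with x hx hxs hxt hxIcc
    have hxo : x ∈ Ioo s t := ⟨lt_of_le_of_ne hxIcc.1 (Ne.symm hxs), lt_of_le_of_ne hxIcc.2 hxt⟩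
    have hx0 : x ∈ Ioo 0 ℓ := ⟨lt_of_le_of_lt hs hxo.1, lt_of_lt_of_le hxo.2 ht⟩
    rw [hx hx0]
    exact hb x hxo
  have engine_ge : ∀ s t : ℝ, 0 ≤ s → s ≤ t → t ≤ ℓ → ∀ h : ℝ → ℝ,
      ContinuousOn h (Icc 0 ℓ) →
      (∀ x ∈ Ioo s t, h x ≤ β * (a x * Real.sqrt (1 + (deriv a x) ^ 2)) * (T x - Tinf)) →
      (∫ x in s..t, h x) ≤ (a t) ^ 2 * T' t - (a s) ^ 2 * T' s := by
    intro s t hs hst ht h hhc hb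
    rw [hkey s t ⟨hs, hst.trans ht⟩ ⟨hs.trans hst, ht⟩]
    have hhint : IntervalIntegrable h volume s t := by
      refine (hhc.mono ?_).intervalIntegrable
      rw [uIcc_of_le hst]; exact Icc_subset_Icc hs ht
    refine intervalIntegral.integral_mono_ae_restrict hst hhint (hΦint s t) ?_
    refine (ae_restrict_iff' measurableSet_Icc).2 ?_
    filter_upwards [hode', hne_ae s, hne_ae t] with x hx hxs hxt hxIcc
    have hxo : x ∈ Ioo s t := ⟨lt_of_le_of_ne hxIcc.1 (Ne.symm hxs), lt_of_le_of_ne hxIcc.2 hxt⟩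
    have hx0 : x ∈ Ioo 0 ℓ := ⟨lt_of_le_of_lt hs hxo.1, lt_of_lt_of_le hxo.2 ht⟩
    rw [hx hx0]
    exact hb x hxo
  have slope_le : ∀ p ∈ Icc 0 ℓ, ∀ s : Set ℝ, s ⊆ Icc 0 ℓ → p ∉ s → (𝓝[s] p).NeBot →
      (∀ x ∈ s, (T x - T p) / (x - p) ≤ 0) → T' p ≤ 0 := by
    intro p hp s hsub hps hne hsl
    have hd : HasDerivWithinAt T (T' p) s p := (hTderiv p hp).mono hsub
    have h2 := hasDerivWithinAt_iff_tendsto_slope.1 hd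
    rw [diff_singleton_eq_self hps] at h2
    refine le_of_tendsto h2 ?_
    filter_upwards [self_mem_nhdsWithin] with x hx
    simpa [slope_def_field] using hsl x hx
  have hKa' : ∀ x ∈ Ioo 0 ℓ, |deriv a x| ≤ (Ka : ℝ) := by
    intro x hx
    have := norm_deriv_le_of_lipschitzOn (Icc_mem_nhds hx.1 hx.2) halip
    simpa [Real.norm_eq_abs] using this
  have haA : ∀ x ∈ Icc 0 ℓ, a x ≤ a 0 + Ka * ℓ := by
    intro x hx
    have h1 : dist (a x) (a 0) ≤ (Ka : ℝ) * dist x 0 :=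
      halip.dist_le_mul x hx 0 (left_mem_Icc.2 hℓ.le)
    rw [Real.dist_eq, Real.dist_eq, sub_zero] at h1
    have h2 : |x| ≤ ℓ := by rw [abs_of_nonneg hx.1]; exact hx.2
    have h4 := le_abs_self (a x - a 0)
    nlinarith [NNReal.coe_nonneg Ka, abs_nonneg x]
  set C := β * ((a 0 + Ka * ℓ) * Real.sqrt (1 + (Ka : ℝ) ^ 2)) with hCdef
  have hsqrt1 : ∀ x : ℝ, (1:ℝ) ≤ Real.sqrt (1 + x ^ 2) := by
    intro x
    have h := Real.sqrt_le_sqrt (show (1:ℝ) ≤ 1 + x ^ 2 by nlinarith [sq_nonneg x])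
    rwa [Real.sqrt_one] at h
  have hA0 : a0 ≤ a 0 + Ka * ℓ :=
    le_trans (ha0le 0 (left_mem_Icc.2 hℓ.le)) (by nlinarith [mul_nonneg (NNReal.coe_nonneg Ka) hℓ.le])
  have hCpos : 0 < C := by
    have h1 : 0 < a 0 + Ka * ℓ := lt_of_lt_of_le ha0 hA0
    have h2 : 0 < Real.sqrt (1 + (Ka : ℝ) ^ 2) := lt_of_lt_of_le one_pos (hsqrt1 _)
    rw [hCdef]
    exact mul_pos hβ (mul_pos h1 h2)
  have hg_bounds : ∀ x ∈ Ioo 0 ℓ,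
      β * a0 ≤ β * (a x * Real.sqrt (1 + (deriv a x) ^ 2)) ∧
      β * (a x * Real.sqrt (1 + (deriv a x) ^ 2)) ≤ C := by
    intro x hx
    have hxI : x ∈ Icc 0 ℓ := ⟨hx.1.le, hx.2.le⟩
    have h1 : (1:ℝ) ≤ Real.sqrt (1 + (deriv a x) ^ 2) := hsqrt1 _
    have h2 : Real.sqrt (1 + (deriv a x) ^ 2) ≤ Real.sqrt (1 + (Ka : ℝ) ^ 2) := by
      apply Real.sqrt_le_sqrt
      nlinarith [hKa' x hx, sq_abs (deriv a x), abs_nonneg (deriv a x), NNReal.coe_nonneg Ka]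
    have hax : a0 ≤ a x := ha0le x hxI
    have haxA : a x ≤ a 0 + Ka * ℓ := haA x hxI
    constructor
    · have h3 : a0 * 1 ≤ a x * Real.sqrt (1 + (deriv a x) ^ 2) :=
        mul_le_mul hax h1 zero_le_one (le_trans ha0.le hax)
      have h4 := mul_le_mul_of_nonneg_left h3 hβ.le
      nlinarith [h4]
    · rw [hCdef]
      have h5 : a x * Real.sqrt (1 + (deriv a x) ^ 2)
          ≤ (a 0 + Ka * ℓ) * Real.sqrt (1 + (Ka : ℝ) ^ 2) :=
        mul_le_mul haxA h2 (Real.sqrt_nonneg _) (by linarith [hA0, ha0.le])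
      exact mul_le_mul_of_nonneg_left h5 hβ.le
  have hβucont : ContinuousOn (fun x => β * a0 * (T x - Tinf)) (Icc 0 ℓ) :=
    continuousOn_const.mul (hTc.sub continuousOn_const)
  have hTftc : ∀ s t : ℝ, 0 ≤ s → s ≤ t → t ≤ ℓ → (∫ x in s..t, T' x) = T t - T s := by
    intro s t hs hst ht
    have hsub : Icc s t ⊆ Icc 0 ℓ := Icc_subset_Icc hs ht
    refine intervalIntegral.integral_eq_sub_of_hasDeriv_right_of_le hst (hTc.mono hsub) ?_ ?_
    · intro x hx
      have hx0 : x ∈ Ioo 0 ℓ := ⟨lt_of_le_of_lt hs hx.1, lt_of_lt_of_le hx.2 ht⟩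
      exact (((hTderiv x ⟨hx0.1.le, hx0.2.le⟩).hasDerivAt
        (Icc_mem_nhds hx0.1 hx0.2)).hasDerivWithinAt)
    · refine (hT'cont.mono ?_).intervalIntegrable
      rw [uIcc_of_le hst]; exact hsub
  -- ====== Main claim: T > Tinf on [0,ℓ] ======
  have hTgt : ∀ x ∈ Icc 0 ℓ, Tinf < T x := by
    by_contra hcon
    push_neg at hcon
    obtain ⟨x₀, hx₀I, hx₀le⟩ := hcon
    set E : Set ℝ := Icc 0 ℓ ∩ T ⁻¹' (Iic Tinf) with hEdef
    have hEne : E.Nonempty := ⟨x₀, hx₀I, hx₀le⟩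
    have hEclosed : IsClosed E := hTc.preimage_isClosed_of_isClosed isClosed_Icc isClosed_Iic
    have hEbdd : BddBelow E := ⟨0, fun x hx => hx.1.1⟩
    set c := sInf E with hcdef
    have hcE : c ∈ E := hEclosed.csInf_mem hEne hEbdd
    have hcI : c ∈ Icc 0 ℓ := hcE.1
    have hTcle : T c ≤ Tinf := hcE.2
    have hc0 : 0 < c := by
      rcases eq_or_lt_of_le hcI.1 with h | h
      · exfalso
        rw [← h, hbc0] at hTcle
        linarith
      · exact h
    have hclℓ : c ≤ ℓ := hcI.2
    have hlt : ∀ x, 0 ≤ x → x < c → Tinf < T x := by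
      intro x hx hxc
      by_contra h
      push_neg at h
      have : x ∈ E := ⟨⟨hx, le_trans hxc.le hclℓ⟩, h⟩
      exact absurd (csInf_le hEbdd this) (not_le.2 hxc)
    have hT'c : T' c ≤ 0 := by
      refine slope_le c hcI (Ico 0 c) (fun y hy => ⟨hy.1, le_trans hy.2.le hclℓ⟩)
        (by simp) ?_ ?_
      · rw [← mem_closure_iff_nhdsWithin_neBot, closure_Ico (ne_of_lt hc0)]
        exact ⟨hc0.le, le_rfl⟩
      · intro x hx
        have h1 : 0 < T x - T c := by
          have := hlt x hx.1 hx.2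
          linarith
        have h2 : x - c < 0 := by linarith [hx.2]
        exact le_of_lt (div_neg_of_pos_of_neg h1 h2)
    rcases lt_or_eq_of_le hT'c with hA | hB
    · -- Case A : T'(c) < 0
      have hcl : c < ℓ := by
        rcases lt_or_eq_of_le hclℓ with h | h
        · exact h
        · exfalso
          rw [h] at hA hTcle
          rw [hbcl] at hA
          nlinarith
      obtain ⟨x₂, hx₂mem, hx₂lt⟩ : ∃ x ∈ Ioc c ℓ, T x < T c := by
        have hd : HasDerivWithinAt T (T' c) (Ioc c ℓ) c :=
          (hTderiv c hcI).mono (fun y hy => ⟨le_trans hc0.le hy.1.le, hy.2⟩)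
        have h2 := hasDerivWithinAt_iff_tendsto_slope.1 hd
        rw [diff_singleton_eq_self (by simp)] at h2
        haveI hne : (𝓝[Ioc c ℓ] c).NeBot := by
          rw [← mem_closure_iff_nhdsWithin_neBot, closure_Ioc (ne_of_lt hcl)]
          exact ⟨le_rfl, hcl.le⟩
        have hev := h2.eventually_lt_const hA
        obtain ⟨x, hx1, hx2⟩ := (hev.and self_mem_nhdsWithin).exists
        refine ⟨x, hx2, ?_⟩
        rw [slope_def_field] at hx1
        by_contra hcon2
        push_neg at hcon2
        have : (0:ℝ) ≤ (T x - T c) / (x - c) :=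
          div_nonneg (by linarith) (by linarith [hx2.1])
        linarith
      obtain ⟨x₁, hx₁mem, hx₁min'⟩ :=
        isCompact_Icc.exists_isMinOn (nonempty_Icc.2 hcl.le)
          (hTc.mono (Icc_subset_Icc hc0.le le_rfl))
      have hx₁min : ∀ y ∈ Icc c ℓ, T x₁ ≤ T y := fun y hy => isMinOn_iff.1 hx₁min' y hy
      have hx₁I : x₁ ∈ Icc 0 ℓ := ⟨le_trans hc0.le hx₁mem.1, hx₁mem.2⟩
      have hTx₁ : T x₁ < Tinf :=
        lt_of_le_of_lt (hx₁min x₂ ⟨hx₂mem.1.le, hx₂mem.2⟩) (lt_of_lt_of_le hx₂lt hTcle)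
      have hx₁c : c < x₁ := by
        rcases lt_or_eq_of_le hx₁mem.1 with h | h
        · exact h
        · exfalso
          have h5 := hx₁min x₂ ⟨hx₂mem.1.le, hx₂mem.2⟩
          rw [← h] at h5
          linarith
      have hT'x₁ : T' x₁ = 0 := by
        rcases lt_or_eq_of_le hx₁mem.2 with h | h
        · have hd : HasDerivAt T (T' x₁) x₁ :=
            (hTderiv x₁ hx₁I).hasDerivAt (Icc_mem_nhds (lt_of_lt_of_le hc0 hx₁mem.1) h)
          refine IsLocalMin.hasDerivAt_eq_zero ?_ hd
          have hmem : Icc c ℓ ∈ 𝓝 x₁ := Icc_mem_nhds hx₁c h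
          filter_upwards [hmem] with y hy
          exact hx₁min y hy
        · have h1 : 0 ≤ T' ℓ := by
            rw [hbcl]
            have : T ℓ ≤ Tinf := by rw [← h]; exact hTx₁.le
            nlinarith
          have h2 : T' ℓ ≤ 0 := by
            refine slope_le ℓ (right_mem_Icc.2 hℓ.le) (Ico c ℓ)
              (fun y hy => ⟨le_trans hc0.le hy.1, hy.2.le⟩) (by simp) ?_ ?_
            · rw [← mem_closure_iff_nhdsWithin_neBot, closure_Ico (ne_of_lt hcl)]
              exact ⟨hcl.le, le_rfl⟩
            · intro x hx
              have hTx : T ℓ ≤ T x := by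
                have h9 := hx₁min x ⟨hx.1, hx.2.le⟩
                rwa [h] at h9
              exact div_nonpos_of_nonneg_of_nonpos (by linarith) (by linarith [hx.2])
          rw [h]
          linarith
      have hTcge : Tinf ≤ T c := by
        haveI hne : (𝓝[Ico 0 c] c).NeBot := by
          rw [← mem_closure_iff_nhdsWithin_neBot, closure_Ico (ne_of_lt hc0)]
          exact ⟨hc0.le, le_rfl⟩
        have hct : Filter.Tendsto T (𝓝[Ico 0 c] c) (𝓝 (T c)) :=
          ((hTderiv c hcI).continuousWithinAt).mono
            (fun y hy => ⟨hy.1, le_trans hy.2.le hclℓ⟩)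
        refine ge_of_tendsto hct ?_
        filter_upwards [self_mem_nhdsWithin] with x hx
        exact (hlt x hx.1 hx.2).le
      set S : Set ℝ := Icc c x₁ ∩ T ⁻¹' (Ici Tinf) with hSdef
      have hSne : S.Nonempty := ⟨c, ⟨le_rfl, hx₁c.le⟩, hTcge⟩
      have hSclosed : IsClosed S :=
        (hTc.mono (Icc_subset_Icc hc0.le hx₁I.2)).preimage_isClosed_of_isClosed
          isClosed_Icc isClosed_Ici
      have hSbdd : BddAbove S := ⟨x₁, fun x hx => hx.1.2⟩
      set c₁ := sSup S with hc₁def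
      have hc₁S : c₁ ∈ S := hSclosed.csSup_mem hSne hSbdd
      have hc₁I : c₁ ∈ Icc 0 ℓ := ⟨le_trans hc0.le hc₁S.1.1, le_trans hc₁S.1.2 hx₁I.2⟩
      have hc₁x₁ : c₁ < x₁ := by
        rcases lt_or_eq_of_le hc₁S.1.2 with h | h
        · exact h
        · exfalso
          have h5 := hc₁S.2
          rw [h] at h5
          exact absurd h5 (not_le.2 hTx₁)
      have hult : ∀ x, c₁ < x → x ≤ x₁ → T x < Tinf := by
        intro x h1 h2
        by_contra h
        push_neg at h
        have hxS : x ∈ S := ⟨⟨le_trans hc₁S.1.1 h1.le, h2⟩, h⟩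
        exact absurd (le_csSup hSbdd hxS) (not_le.2 h1)
      have hT'c₁ : T' c₁ ≤ 0 := by
        refine slope_le c₁ hc₁I (Ioc c₁ x₁)
          (fun y hy => ⟨le_trans hc₁I.1 hy.1.le, le_trans hy.2 hx₁I.2⟩) (by simp) ?_ ?_
        · rw [← mem_closure_iff_nhdsWithin_neBot, closure_Ioc (ne_of_lt hc₁x₁)]
          exact ⟨le_rfl, hc₁x₁.le⟩
        · intro x hx
          have h1 : T x < Tinf := hult x hx.1 hx.2
          have h2 : Tinf ≤ T c₁ := hc₁S.2
          exact div_nonpos_of_nonpos_of_nonneg (by linarith) (by linarith [hx.1])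
      have hb4 : ∀ x ∈ Ioo c₁ x₁,
          β * (a x * Real.sqrt (1 + (deriv a x) ^ 2)) * (T x - Tinf)
            ≤ β * a0 * (T x - Tinf) := by
        intro x hx
        have hx0 : x ∈ Ioo 0 ℓ := ⟨lt_of_le_of_lt hc₁I.1 hx.1, lt_of_lt_of_le hx.2 hx₁I.2⟩
        have hu : T x - Tinf ≤ 0 := by
          have := hult x hx.1 hx.2.le
          linarith
        exact mul_le_mul_of_nonpos_right (hg_bounds x hx0).1 hu
      have h4 := engine_le c₁ x₁ hc₁I.1 hc₁x₁.le hx₁I.2 _ hβucont hb4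
      have hint5 : IntervalIntegrable (fun x => β * a0 * (T x - Tinf)) volume c₁ x₁ := by
        refine (hβucont.mono ?_).intervalIntegrable
        rw [uIcc_of_le hc₁x₁.le]; exact Icc_subset_Icc hc₁I.1 hx₁I.2
      have h5 : (0:ℝ) < ∫ x in c₁..x₁, -(β * a0 * (T x - Tinf)) := by
        refine intervalIntegral_pos_of_pos_on hint5.neg ?_ hc₁x₁
        intro x hx
        have h9 := hult x hx.1 hx.2.le
        nlinarith [mul_pos (mul_pos hβ ha0) (sub_pos.2 h9)]
      rw [intervalIntegral.integral_neg] at h5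
      have hφc₁ : (a c₁) ^ 2 * T' c₁ ≤ 0 := mul_nonpos_of_nonneg_of_nonpos (sq_nonneg _) hT'c₁
      have hφx₁ : (a x₁) ^ 2 * T' x₁ = 0 := by rw [hT'x₁]; ring
      rw [hφx₁] at h4
      linarith
    · -- Case B : T'(c) = 0
      have hφc : (a c) ^ 2 * T' c = 0 := by rw [hB]; ring
      set D := C / a0 ^ 2 with hDdef
      have hDpos : 0 < D := div_pos hCpos (by positivity)
      set δ := min c (min 1 (1 / (2 * D))) with hδdef
      have hδpos : 0 < δ := lt_min hc0 (lt_min one_pos (by positivity))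
      have hδc : δ ≤ c := min_le_left _ _
      have hδ1 : δ ≤ 1 := le_trans (min_le_right _ _) (min_le_left _ _)
      have hδD : δ ≤ 1 / (2 * D) := le_trans (min_le_right _ _) (min_le_right _ _)
      set x₃ := c - δ with hx₃def
      have hx₃0 : 0 ≤ x₃ := by rw [hx₃def]; linarith
      have hx₃c : x₃ < c := by rw [hx₃def]; linarith
      obtain ⟨ξ, hξmem, hξmax'⟩ := isCompact_Icc.exists_isMaxOn (nonempty_Icc.2 hx₃c.le)
        (hTc.mono (Icc_subset_Icc hx₃0 hclℓ))
      have hξmax : ∀ y ∈ Icc x₃ c, T y ≤ T ξ := fun y hy => isMaxOn_iff.1 hξmax' y hy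
      set M := T ξ - Tinf with hMdef
      have hMpos : 0 < M := by
        have h1 := hlt x₃ hx₃0 hx₃c
        have h2 := hξmax x₃ (left_mem_Icc.2 hx₃c.le)
        rw [hMdef]; linarith
      have step2 : ∀ t ∈ Icc x₃ c, -(D * M * δ) ≤ T' t := by
        intro t ht
        have htI : t ∈ Icc 0 ℓ := ⟨le_trans hx₃0 ht.1, le_trans ht.2 hclℓ⟩
        have hb1 : ∀ x ∈ Ioo t c,
            β * (a x * Real.sqrt (1 + (deriv a x) ^ 2)) * (T x - Tinf)
              ≤ C * (T x - Tinf) := by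
          intro x hx
          have hx0 : x ∈ Ioo 0 ℓ := ⟨lt_of_le_of_lt htI.1 hx.1, lt_of_lt_of_le hx.2 hclℓ⟩
          have hu : 0 ≤ T x - Tinf := by
            have := hlt x (le_trans htI.1 hx.1.le) hx.2
            linarith
          exact mul_le_mul_of_nonneg_right (hg_bounds x hx0).2 hu
        have hCu : ContinuousOn (fun x => C * (T x - Tinf)) (Icc 0 ℓ) :=
          continuousOn_const.mul (hTc.sub continuousOn_const)
        have h1 := engine_le t c htI.1 ht.2 hclℓ _ hCu hb1
        have hint1 : IntervalIntegrable (fun x => C * (T x - Tinf)) volume t c := by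
          refine (hCu.mono ?_).intervalIntegrable
          rw [uIcc_of_le ht.2]; exact Icc_subset_Icc htI.1 hclℓ
        have h2 : (∫ x in t..c, C * (T x - Tinf)) ≤ ∫ x in t..c, C * M := by
          refine intervalIntegral.integral_mono_on ht.2 hint1 intervalIntegrable_const ?_
          intro x hx
          have h6 : T x ≤ T ξ := hξmax x ⟨le_trans ht.1 hx.1, hx.2⟩
          have h7 : T x - Tinf ≤ M := by rw [hMdef]; linarith
          nlinarith [hCpos.le]
        rw [intervalIntegral.integral_const, smul_eq_mul] at h2
        have hct : c - t ≤ δ := by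
          have := ht.1
          rw [hx₃def] at this
          linarith
        have hCM : 0 ≤ C * M := by positivity
        have hsmul : (c - t) * (C * M) ≤ C * M * δ := by nlinarith
        have h3 : -(C * M * δ) ≤ (a t) ^ 2 * T' t := by linarith
        have hat : a0 ≤ a t := ha0le t htI
        have hDa : D * a0 ^ 2 = C := by rw [hDdef]; field_simp
        by_contra hcon2
        push_neg at hcon2
        have hDMδ : 0 < D * M * δ := by positivity
        have hTneg : T' t < 0 := lt_of_lt_of_le hcon2 (by linarith)
        have haa : a0 ^ 2 ≤ (a t) ^ 2 := by nlinarith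
        have h5 : a0 ^ 2 * T' t < a0 ^ 2 * (-(D * M * δ)) := by nlinarith [pow_pos ha0 2]
        have h6 : (a t) ^ 2 * T' t ≤ a0 ^ 2 * T' t := by nlinarith
        have h7 : a0 ^ 2 * (-(D * M * δ)) = -(C * M * δ) := by rw [← hDa]; ring
        linarith
      have step3 : ∀ x ∈ Icc x₃ c, T x - Tinf ≤ D * M * δ * (c - x) + (T c - Tinf) := by
        intro x hx
        have hxI : x ∈ Icc 0 ℓ := ⟨le_trans hx₃0 hx.1, le_trans hx.2 hclℓ⟩
        have h1 : (∫ y in x..c, T' y) = T c - T x := hTftc x c hxI.1 hx.2 hclℓ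
        have h2 : (∫ y in x..c, (-(D * M * δ) : ℝ)) ≤ ∫ y in x..c, T' y := by
          refine intervalIntegral.integral_mono_on hx.2 intervalIntegrable_const ?_ ?_
          · refine (hT'cont.mono ?_).intervalIntegrable
            rw [uIcc_of_le hx.2]; exact Icc_subset_Icc hxI.1 hclℓ
          · intro y hy
            exact step2 y ⟨le_trans hx.1 hy.1, hy.2⟩
        rw [intervalIntegral.integral_const, h1, smul_eq_mul] at h2
        nlinarith [h2]
      have hfin := step3 ξ hξmem
      have hcξ : c - ξ ≤ δ := by
        have := hξmem.1
        rw [hx₃def] at this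
        linarith
      have hξc : ξ ≤ c := hξmem.2
      have hTcTinf : T c - Tinf ≤ 0 := by linarith
      have h2d : 2 * D * δ ≤ 1 := by
        rw [le_div_iff₀ (by positivity)] at hδD
        linarith
      have hDMδnn : 0 ≤ D * M * δ := by positivity
      nlinarith [hfin, hMpos, hδ1, h2d, hδpos.le, hDpos.le, hDMδnn, hcξ, hTcTinf,
        mul_nonneg hMpos.le hδpos.le, mul_le_mul_of_nonneg_left hcξ hDMδnn]
  -- ====== conclusion ======
  have hT'neg : ∀ x ∈ Ico 0 ℓ, T' x < 0 := by
    intro x hx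
    have hxI : x ∈ Icc 0 ℓ := ⟨hx.1, hx.2.le⟩
    have hb : ∀ y ∈ Ioo x ℓ, β * a0 * (T y - Tinf)
        ≤ β * (a y * Real.sqrt (1 + (deriv a y) ^ 2)) * (T y - Tinf) := by
      intro y hy
      have hy0 : y ∈ Ioo 0 ℓ := ⟨lt_of_le_of_lt hx.1 hy.1, hy.2⟩
      have hu : 0 ≤ T y - Tinf := by
        have := hTgt y ⟨hy0.1.le, hy0.2.le⟩
        linarith
      exact mul_le_mul_of_nonneg_right (hg_bounds y hy0).1 hu
    have h1 := engine_ge x ℓ hx.1 hx.2.le le_rfl _ hβucont hb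
    have hint : IntervalIntegrable (fun y => β * a0 * (T y - Tinf)) volume x ℓ := by
      refine (hβucont.mono ?_).intervalIntegrable
      rw [uIcc_of_le hx.2.le]; exact Icc_subset_Icc hx.1 le_rfl
    have h2 : (0:ℝ) < ∫ y in x..ℓ, β * a0 * (T y - Tinf) := by
      refine intervalIntegral_pos_of_pos_on hint ?_ hx.2
      intro y hy
      have h9 := hTgt y ⟨(lt_of_le_of_lt hx.1 hy.1).le, hy.2.le⟩
      nlinarith [mul_pos (mul_pos hβ ha0) (sub_pos.2 h9)]
    have h3 : (a ℓ) ^ 2 * T' ℓ ≤ 0 := by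
      rw [hbcl]
      have h9 := hTgt ℓ (right_mem_Icc.2 hℓ.le)
      nlinarith [mul_nonneg (sq_nonneg (a ℓ)) (mul_nonneg hβr (sub_pos.2 h9).le)]
    have h4 : (a x) ^ 2 * T' x < 0 := by linarith
    by_contra hcon
    push_neg at hcon
    nlinarith [hapos x hxI, hcon, h4]
  have hanti : StrictAntiOn T (Icc 0 ℓ) := by
    apply strictAntiOn_of_deriv_neg (convex_Icc 0 ℓ) hTc
    intro x hx
    rw [interior_Icc] at hx
    have hda : HasDerivAt T (T' x) x :=
      (hTderiv x ⟨hx.1.le, hx.2.le⟩).hasDerivAt (Icc_mem_nhds hx.1 hx.2)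
    rw [hda.deriv]
    exact hT'neg x ⟨hx.1.le, hx.2⟩
  refine ⟨hanti, fun x hx => ?_⟩
  have := hanti (left_mem_Icc.2 hℓ.le) ⟨hx.1.le, hx.2⟩ hx.1
  rwa [hbc0] at this
end
end

section
/- Let T be a temperature profile for an admissible radius a. Then a0·min{β, a0} · ∫₀^ℓ ( (T(x) − T∞)² + T'(x)² ) dx ≤ βr (sup_{[0,ℓ]} a)² (Td − T∞)² + β (Td − T∞)² ∫₀^ℓ a(x)√(1+a'(x)²) dx. -/
open MeasureTheory Set

noncomputable section

open Filter Topology intervalIntegral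

set_option maxHeartbeats 1000000

lemma abs_deriv_le_of_lipschitz {K : NNReal} {g : ℝ → ℝ} (hg : LipschitzWith K g) (x : ℝ) :
    |deriv g x| ≤ K := by
  by_cases h : DifferentiableAt ℝ g x
  · have h1 : ‖fderiv ℝ g x‖ ≤ K := norm_fderiv_le_of_lipschitz ℝ hg
    have h2 : (fderiv ℝ g x) 1 = deriv g x := fderiv_apply_one_eq_deriv
    calc |deriv g x| = ‖(fderiv ℝ g x) 1‖ := by rw [h2]; rfl
    _ ≤ ‖fderiv ℝ g x‖ * ‖(1:ℝ)‖ := (fderiv ℝ g x).le_opNorm 1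
    _ ≤ K := by simpa using h1
  · simp [deriv_zero_of_not_differentiableAt h, K.coe_nonneg]

lemma lipschitz_integral_deriv {K : NNReal} {g : ℝ → ℝ} (hg : LipschitzWith K g)
    {u v : ℝ} (huv : u ≤ v) : ∫ x in u..v, deriv g x = g v - g u := by
  have gc : Continuous g := hg.continuous
  set h : ℕ → ℝ := fun n => 1 / (n + 1) with hh
  have hpos : ∀ n, 0 < h n := fun n => by positivity
  have hlim : Tendsto h atTop (𝓝 0) := tendsto_one_div_add_atTop_nhds_zero_nat
  set q : ℕ → ℝ → ℝ := fun n x => (g (x + h n) - g x) / h n with hq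
  -- a.e. convergence of difference quotients
  have hae : ∀ᵐ x ∂(volume.restrict (Ioc u v)),
      Tendsto (fun n => q n x) atTop (𝓝 (deriv g x)) := by
    have := hg.ae_differentiableAt_of_real (μ := volume)
    filter_upwards [ae_restrict_of_ae this] with x hx
    have hd : HasDerivAt g (deriv g x) x := hx.hasDerivAt
    have hslope : Tendsto (slope g x) (𝓝[≠] x) (𝓝 (deriv g x)) :=
      hasDerivAt_iff_tendsto_slope.1 hd
    have hseq : Tendsto (fun n => x + h n) atTop (𝓝[≠] x) := by
      apply tendsto_nhdsWithin_of_tendsto_nhds_of_eventually_within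
      · simpa using tendsto_const_nhds.add hlim
      · exact Eventually.of_forall fun n => by
          simp [ne_of_gt, (hpos n).ne']
    have := hslope.comp hseq
    convert this using 2 with n
    simp [slope, q, vsub_eq_sub]
    rw [div_eq_inv_mul]
  -- dominated convergence
  have hmeas : ∀ n, AEStronglyMeasurable (q n) (volume.restrict (Ioc u v)) := fun n =>
    (((gc.comp (continuous_id.add continuous_const)).sub gc).div_const _).aestronglyMeasurable
  have hbound : ∀ n, ∀ᵐ x ∂(volume.restrict (Ioc u v)), ‖q n x‖ ≤ (K : ℝ) := fun n => by
    refine Eventually.of_forall fun x => ?_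
    have h1 : |g (x + h n) - g x| ≤ K * |x + h n - x| := by
      have := hg.dist_le_mul (x + h n) x
      simpa [Real.dist_eq] using this
    rw [Real.norm_eq_abs, hq, abs_div, abs_of_pos (hpos n)]
    rw [div_le_iff₀ (hpos n)]
    simpa [abs_of_pos (hpos n)] using h1
  have hKint : Integrable (fun _ : ℝ => (K : ℝ)) (volume.restrict (Ioc u v)) :=
    integrable_const _
  have hDC : Tendsto (fun n => ∫ x in Ioc u v, q n x) atTop
      (𝓝 (∫ x in Ioc u v, deriv g x)) :=
    tendsto_integral_of_dominated_convergence _ hmeas hKint hbound hae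
  -- compute the integral of the quotients
  have hint : ∀ w : ℝ, ∀ n, IntervalIntegrable g volume w (w + h n) :=
    fun w n => gc.intervalIntegrable _ _
  have hcomp : ∀ n, ∫ x in Ioc u v, q n x
      = ((∫ x in v..(v + h n), g x) - ∫ x in u..(u + h n), g x) / h n := by
    intro n
    rw [← intervalIntegral.integral_of_le huv]
    have e1 : ∫ x in u..v, q n x = ((∫ x in u..v, g (x + h n)) - ∫ x in u..v, g x) / h n := by
      simp only [hq]
      rw [intervalIntegral.integral_div]
      congr 1
      exact intervalIntegral.integral_sub ((gc.comp (continuous_id.add continuous_const)).intervalIntegrable _ _) (gc.intervalIntegrable _ _)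
    rw [e1]
    congr 1
    rw [intervalIntegral.integral_comp_add_right]
    have h2 : ∫ x in (u + h n)..(v + h n), g x
        = (∫ x in (u + h n)..v, g x) + ∫ x in v..(v + h n), g x :=
      (intervalIntegral.integral_add_adjacent_intervals (gc.intervalIntegrable _ _)
        (gc.intervalIntegrable _ _)).symm
    have h3 : ∫ x in u..v, g x
        = (∫ x in u..(u + h n), g x) + ∫ x in (u + h n)..v, g x :=
      (intervalIntegral.integral_add_adjacent_intervals (gc.intervalIntegrable _ _)
        (gc.intervalIntegrable _ _)).symm
    rw [h2, h3]; ring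
  -- limits of boundary averages
  have hbdry : ∀ w : ℝ, Tendsto (fun n => (∫ x in w..(w + h n), g x) / h n) atTop (𝓝 (g w)) := by
    intro w
    have hG : HasDerivAt (fun t => ∫ x in w..t, g x) (g w) w := by
      exact intervalIntegral.integral_hasDerivAt_right (gc.intervalIntegrable _ _)
        (gc.stronglyMeasurable.stronglyMeasurableAtFilter) gc.continuousAt
    have hslope : Tendsto (slope (fun t => ∫ x in w..t, g x) w) (𝓝[≠] w) (𝓝 (g w)) :=
      hasDerivAt_iff_tendsto_slope.1 hG
    have hseq : Tendsto (fun n => w + h n) atTop (𝓝[≠] w) := by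
      apply tendsto_nhdsWithin_of_tendsto_nhds_of_eventually_within
      · simpa using tendsto_const_nhds.add hlim
      · exact Eventually.of_forall fun n => by simp [ne_of_gt, (hpos n).ne']
    have := hslope.comp hseq
    convert this using 2 with n
    simp [slope, vsub_eq_sub]
    rw [div_eq_inv_mul]
  have hfinal : Tendsto (fun n => ∫ x in Ioc u v, q n x) atTop (𝓝 (g v - g u)) := by
    simp only [hcomp, sub_div]
    exact (hbdry v).sub (hbdry u)
  have := tendsto_nhds_unique hDC hfinal
  rw [intervalIntegral.integral_of_le huv]
  exact this

lemma deriv_ext_of_eqOn {g G : ℝ → ℝ} {ℓ : ℝ} (hGeq : Set.EqOn g G (Icc 0 ℓ))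
    {x : ℝ} (hx : x ∈ Ioo 0 ℓ) : deriv G x = deriv g x := by
  apply Filter.EventuallyEq.deriv_eq
  filter_upwards [Icc_mem_nhds hx.1 hx.2] with y hy
  exact (hGeq hy).symm

lemma integrableOn_of_bounded_aesm {f : ℝ → ℝ} {u v C : ℝ}
    (hm : AEStronglyMeasurable f (volume.restrict (Ioc u v)))
    (hb : ∀ᵐ x ∂(volume.restrict (Ioc u v)), |f x| ≤ C) :
    IntegrableOn f (Ioc u v) volume := by
  apply Integrable.mono' (g := fun _ => C) _ hm (by simpa [Real.norm_eq_abs] using hb)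
  apply integrable_const_iff.2
  right
  exact isFiniteMeasure_restrict.2 (by simp [Real.volume_Ioc])

lemma integrableOn_deriv_of_lipschitz {K : NNReal} {G : ℝ → ℝ} (hG : LipschitzWith K G)
    (u v : ℝ) : IntegrableOn (deriv G) (Ioc u v) volume :=
  integrableOn_of_bounded_aesm ((measurable_deriv G).aestronglyMeasurable)
    (Filter.Eventually.of_forall fun x => abs_deriv_le_of_lipschitz hG x)

lemma exists_lipschitzOnWith_mul {f g : ℝ → ℝ} {s : Set ℝ} {Kf Kg : NNReal} {Mf Mg : ℝ}
    (hf : LipschitzOnWith Kf f s) (hg : LipschitzOnWith Kg g s)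
    (hMf : ∀ x ∈ s, |f x| ≤ Mf) (hMg : ∀ x ∈ s, |g x| ≤ Mg) :
    ∃ K : NNReal, LipschitzOnWith K (fun x => f x * g x) s := by
  rcases s.eq_empty_or_nonempty with rfl | ⟨z, hz⟩
  · exact ⟨1, by simp⟩
  have hMf0 : 0 ≤ Mf := (abs_nonneg _).trans (hMf z hz)
  have hMg0 : 0 ≤ Mg := (abs_nonneg _).trans (hMg z hz)
  have hC0 : 0 ≤ Mg * (Kf : ℝ) + Mf * (Kg : ℝ) := by positivity
  refine ⟨⟨_, hC0⟩, ?_⟩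
  apply lipschitzOnWith_iff_dist_le_mul.2
  intro x hx y hy
  rw [Real.dist_eq, Real.dist_eq]
  have h2 : |f x - f y| ≤ (Kf : ℝ) * |x - y| := by
    simpa [Real.dist_eq] using (lipschitzOnWith_iff_dist_le_mul.1 hf) x hx y hy
  have h3 : |g x - g y| ≤ (Kg : ℝ) * |x - y| := by
    simpa [Real.dist_eq] using (lipschitzOnWith_iff_dist_le_mul.1 hg) x hx y hy
  calc |f x * g x - f y * g y| = |(f x - f y) * g x + f y * (g x - g y)| := by ring_nf
    _ ≤ |(f x - f y) * g x| + |f y * (g x - g y)| := abs_add_le _ _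
    _ = |f x - f y| * |g x| + |f y| * |g x - g y| := by rw [abs_mul, abs_mul]
    _ ≤ ((Kf : ℝ) * |x - y|) * Mg + Mf * ((Kg : ℝ) * |x - y|) := by
        have := abs_nonneg (f x - f y); have := abs_nonneg (g x - g y)
        have := abs_nonneg (f y); have := abs_nonneg (g x)
        have h4 := hMg x hx; have h5 := hMf y hy
        nlinarith [abs_nonneg (x - y)]
    _ = (Mg * (Kf : ℝ) + Mf * (Kg : ℝ)) * |x - y| := by ring



lemma temp_upper (ℓ a0 β βr Tinf Td : ℝ) (hℓ : 0 < ℓ) (ha0 : 0 < a0) (hβ : 0 < β) (hβr : 0 ≤ βr)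
    (a T T' : ℝ → ℝ) (ha : IsAdmissible ℓ a0 a) (hT : IsTempProfile ℓ β βr Tinf Td a T T') :
    ∀ x ∈ Icc 0 ℓ, T x ≤ max Td Tinf := by
  obtain ⟨⟨Ka, haLip⟩, haLB⟩ := ha
  obtain ⟨hT'c, hTd', ⟨Kg, hgLip⟩, hODE, hT0, hTl⟩ := hT
  set g : ℝ → ℝ := fun x => (a x) ^ 2 * T' x with hgdef
  obtain ⟨G, hGlip, hGeq⟩ := hgLip.extend_real
  have Tcont : ContinuousOn T (Icc 0 ℓ) := fun x hx => (hTd' x hx).continuousWithinAt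
  by_contra hcon
  push_neg at hcon
  obtain ⟨x₁, hx₁, hx₁T⟩ := hcon
  obtain ⟨x₀, hx₀, hmax⟩ := isCompact_Icc.exists_isMaxOn ⟨0, left_mem_Icc.2 hℓ.le⟩ Tcont
  set M := T x₀ with hM
  have hMgt : max Td Tinf < M := lt_of_lt_of_le hx₁T (hmax hx₁)
  have hx₀0 : x₀ ≠ 0 := by
    intro h
    rw [h] at hM
    rw [hM, hT0] at hMgt
    exact absurd (le_max_left Td Tinf) (not_le.2 hMgt)
  have hx₀pos : 0 < x₀ := lt_of_le_of_ne hx₀.1 (Ne.symm hx₀0)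
  -- g x₀ ≤ 0
  have hgx₀ : g x₀ ≤ 0 := by
    rcases eq_or_lt_of_le hx₀.2 with heq | hlt
    · rw [hgdef]
      simp only [heq]
      rw [hTl]
      have h1 : 0 < T ℓ - Tinf := by
        have : Tinf < M := lt_of_le_of_lt (le_max_right Td Tinf) hMgt
        rw [hM, heq] at this; linarith
      have : -βr * (T ℓ - Tinf) ≤ 0 := mul_nonpos_of_nonpos_of_nonneg (by linarith) h1.le
      exact mul_nonpos_of_nonneg_of_nonpos (sq_nonneg _) this
    · have hnhds : Icc (0:ℝ) ℓ ∈ 𝓝 x₀ := Icc_mem_nhds hx₀pos hlt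
      have hTat : HasDerivAt T (T' x₀) x₀ := (hTd' x₀ hx₀).hasDerivAt hnhds
      have : T' x₀ = 0 := (hmax.isLocalMax hnhds).hasDerivAt_eq_zero hTat
      rw [hgdef]; simp [this]
  -- the crossing point c
  set m := (max Td Tinf + M) / 2 with hm
  have hmTd : Td < m := by have := le_max_left Td Tinf; simp only [hm]; linarith
  have hmTinf : Tinf < m := by have := le_max_right Td Tinf; simp only [hm]; linarith
  have hmM : m < M := by simp only [hm]; linarith
  set S : Set ℝ := Icc 0 x₀ ∩ T ⁻¹' (Iic m) with hS
  have hScl : IsClosed S :=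
    (Tcont.mono (Icc_subset_Icc le_rfl hx₀.2)).preimage_isClosed_of_isClosed
      isClosed_Icc isClosed_Iic
  have h0S : (0:ℝ) ∈ S := ⟨left_mem_Icc.2 hx₀pos.le, by simp [hT0, hmTd.le]⟩
  have hSbdd : BddAbove S := (bddAbove_Icc).mono inter_subset_left
  set c := sSup S with hc
  have hcS : c ∈ S := hScl.csSup_mem ⟨0, h0S⟩ hSbdd
  have hcIcc : c ∈ Icc 0 x₀ := hcS.1
  have hTcle : T c ≤ m := hcS.2
  have hcx₀ : c < x₀ := by
    rcases lt_or_eq_of_le hcIcc.2 with h | h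
    · exact h
    · exfalso; rw [h] at hTcle; exact absurd hTcle (not_le.2 hmM)
  have hcmem : c ∈ Icc 0 ℓ := ⟨hcIcc.1, hcIcc.2.trans hx₀.2⟩
  have hsub : Ioc c x₀ ⊆ Icc 0 ℓ := fun x hx =>
    ⟨hcIcc.1.trans hx.1.le, hx.2.trans hx₀.2⟩
  have hgt : ∀ x ∈ Ioc c x₀, m < T x := by
    intro x hx
    by_contra h
    push_neg at h
    have hxS : x ∈ S := ⟨⟨hcIcc.1.trans hx.1.le, hx.2⟩, h⟩
    exact absurd (le_csSup hSbdd hxS) (not_le.2 hx.1)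
  -- neBot filter at c from the right within Ioc c x₀
  have hne : (𝓝[Ioc c x₀] c).NeBot := by
    rw [← mem_closure_iff_nhdsWithin_neBot, closure_Ioc hcx₀.ne]
    exact left_mem_Icc.2 hcx₀.le
  -- T c = m
  have hTc : T c = m := by
    refine le_antisymm hTcle ?_
    have hcw : ContinuousWithinAt T (Ioc c x₀) c :=
      (Tcont c hcmem).mono hsub
    exact ge_of_tendsto hcw (eventually_nhdsWithin_of_forall fun x hx => (hgt x hx).le)
  -- T' c ≥ 0
  have hT'c0 : 0 ≤ T' c := by
    have hd : HasDerivWithinAt T (T' c) (Ioc c x₀) c := (hTd' c hcmem).mono hsub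
    have hslope := hasDerivWithinAt_iff_tendsto_slope.1 hd
    have hcnot : c ∉ Ioc c x₀ := by simp
    rw [diff_singleton_eq_self hcnot] at hslope
    refine ge_of_tendsto hslope (eventually_nhdsWithin_of_forall fun x hx => ?_)
    have h1 : 0 < x - c := sub_pos.2 hx.1
    have h2 : 0 ≤ T x - T c := by rw [hTc]; linarith [hgt x hx]
    simp only [slope_def_field]
    positivity
  have hgc : 0 ≤ g c := mul_nonneg (sq_nonneg _) hT'c0
  -- FTC lower bound
  set δ := β * (a0 * (m - Tinf)) with hδdef
  have hδ : 0 < δ := by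
    apply mul_pos hβ (mul_pos ha0 (by linarith))
  have hFTC : ∫ x in c..x₀, deriv G x = g x₀ - g c := by
    rw [lipschitz_integral_deriv hGlip hcx₀.le, hGeq hcmem, hGeq (hsub (right_mem_Ioc.2 hcx₀))]
  have hODE' : ∀ᵐ x ∂(volume.restrict (Ioc c x₀)), δ ≤ deriv G x := by
    rw [← Measure.restrict_congr_set Ioo_ae_eq_Ioc]
    have hsub2 : Ioo c x₀ ⊆ Ioo 0 ℓ := fun x hx =>
      ⟨lt_of_le_of_lt hcIcc.1 hx.1, lt_of_lt_of_le hx.2 hx₀.2⟩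
    have h1 := ae_restrict_of_ae_restrict_of_subset hsub2 hODE
    filter_upwards [h1, ae_restrict_mem measurableSet_Ioo] with x hx hxmem
    have hxIoo : x ∈ Ioo 0 ℓ := hsub2 hxmem
    rw [deriv_ext_of_eqOn hGeq hxIoo, hx]
    have h2 : a0 ≤ a x := haLB x ⟨hxIoo.1.le, hxIoo.2.le⟩
    have h3 : (1:ℝ) ≤ Real.sqrt (1 + (deriv a x) ^ 2) :=
      calc (1:ℝ) = Real.sqrt 1 := Real.sqrt_one.symm
        _ ≤ Real.sqrt (1 + (deriv a x) ^ 2) :=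
            Real.sqrt_le_sqrt (by nlinarith [sq_nonneg (deriv a x)])
    have h4 : m - Tinf ≤ T x - Tinf := by
      have := hgt x ⟨hxmem.1, hxmem.2.le⟩; linarith
    have h5 : (0:ℝ) < m - Tinf := by linarith
    have h6 : a0 * 1 ≤ a x * Real.sqrt (1 + (deriv a x) ^ 2) := by
      apply mul_le_mul h2 h3 zero_le_one (le_trans ha0.le h2)
    rw [hδdef]
    calc β * (a0 * (m - Tinf)) = β * (a0 * 1) * (m - Tinf) := by ring
      _ ≤ β * (a x * Real.sqrt (1 + (deriv a x) ^ 2)) * (T x - Tinf) := by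
          apply mul_le_mul (by exact mul_le_mul le_rfl h6 (by positivity) hβ.le) h4 h5.le
          exact mul_nonneg hβ.le (mul_nonneg (ha0.le.trans h2) (Real.sqrt_nonneg _))
  have hlow : δ * (x₀ - c) ≤ ∫ x in c..x₀, deriv G x := by
    rw [intervalIntegral.integral_of_le hcx₀.le]
    have h1 : ∫ _ in Ioc c x₀, δ ∂volume = δ * (x₀ - c) := by
      rw [setIntegral_const, measureReal_def, Real.volume_Ioc, smul_eq_mul,
        ENNReal.toReal_ofReal (by linarith), mul_comm]
    rw [← h1]
    exact setIntegral_mono_ae_restrict (integrableOn_const (by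
      rw [Real.volume_Ioc]; exact ENNReal.ofReal_ne_top))
      (integrableOn_deriv_of_lipschitz hGlip c x₀) hODE'
  rw [hFTC] at hlow
  nlinarith [mul_pos hδ (sub_pos.2 hcx₀)]

lemma temp_lower (ℓ a0 β βr Tinf Td : ℝ) (hℓ : 0 < ℓ) (ha0 : 0 < a0) (hβ : 0 < β) (hβr : 0 ≤ βr)
    (hTd : Tinf ≤ Td)
    (a T T' : ℝ → ℝ) (ha : IsAdmissible ℓ a0 a) (hT : IsTempProfile ℓ β βr Tinf Td a T T') :
    ∀ x ∈ Icc 0 ℓ, Tinf ≤ T x := by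
  obtain ⟨hT'c, hTd', ⟨Kg, hgLip⟩, hODE, hT0, hTl⟩ := hT
  have hprof : IsTempProfile ℓ β βr Tinf (2 * Tinf - Td) a
      (fun x => 2 * Tinf - T x) (fun x => -T' x) := by
    refine ⟨hT'c.neg, fun x hx => (hTd' x hx).const_sub _, ⟨Kg, ?_⟩, ?_, by simp [hT0], by
      simp only [hTl]; ring⟩
    · have heq : (fun x => (a x) ^ 2 * -T' x) = (fun y => -y) ∘ (fun x => (a x) ^ 2 * T' x) := by
        funext x; simp
      rw [heq]
      simpa using (LipschitzWith.comp_lipschitzOnWith ((isometry_neg (G := ℝ)).lipschitz) hgLip)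
    · have heq : (fun y => (a y) ^ 2 * -T' y) = (fun y => -((a y) ^ 2 * T' y)) := by
        funext y; ring
      rw [heq]
      filter_upwards [hODE] with x hx
      rw [deriv.fun_neg, hx]; ring
  have h := temp_upper ℓ a0 β βr Tinf (2 * Tinf - Td) hℓ ha0 hβ hβr a _ _ ha hprof
  intro x hx
  have h2 := h x hx
  have h3 : max (2 * Tinf - Td) Tinf = Tinf := max_eq_right (by linarith)
  rw [h3] at h2
  linarith

/-- A priori `H¹` energy estimate for the temperature along the fin:
`a0 min{β,a0} ∫₀^ℓ ((T − T∞)² + T'²) ≤ βr (sup a)² (Td − T∞)² + β (Td − T∞)² ∫₀^ℓ a √(1+a'²)`. -/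
theorem temperature_energy_estimate
    (ℓ a0 β βr Tinf Td : ℝ) (hℓ : 0 < ℓ) (ha0 : 0 < a0) (hβ : 0 < β) (hβr : 0 ≤ βr)
    (hTinf : 0 < Tinf) (hTd : Tinf < Td)
    (a T T' : ℝ → ℝ) (ha : IsAdmissible ℓ a0 a)
    (hT : IsTempProfile ℓ β βr Tinf Td a T T') :
    a0 * min β a0 * (∫ x in (0:ℝ)..ℓ, ((T x - Tinf) ^ 2 + (T' x) ^ 2))
      ≤ βr * (sSup (a '' Set.Icc 0 ℓ)) ^ 2 * (Td - Tinf) ^ 2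
        + β * (Td - Tinf) ^ 2
          * (∫ x in (0:ℝ)..ℓ, a x * Real.sqrt (1 + (deriv a x) ^ 2)) := by
  -- max principle bounds
  have hTub := temp_upper ℓ a0 β βr Tinf Td hℓ ha0 hβ hβr a T T' ha hT
  have hTlb := temp_lower ℓ a0 β βr Tinf Td hℓ ha0 hβ hβr hTd.le a T T' ha hT
  have hmaxeq : max Td Tinf = Td := max_eq_left hTd.le
  rw [hmaxeq] at hTub
  obtain ⟨⟨Ka, haLip⟩, haLB⟩ := ha
  obtain ⟨hT'c, hTd', ⟨Kg, hgLip⟩, hODE, hT0, hTl⟩ := hT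
  set g : ℝ → ℝ := fun x => (a x) ^ 2 * T' x with hgdef
  set w : ℝ → ℝ := fun x => a x * Real.sqrt (1 + (deriv a x) ^ 2) with hwdef
  have acont : ContinuousOn a (Icc 0 ℓ) := haLip.continuousOn
  have Tcont : ContinuousOn T (Icc 0 ℓ) := fun x hx => (hTd' x hx).continuousWithinAt
  have gcont : ContinuousOn g (Icc 0 ℓ) := hgLip.continuousOn
  obtain ⟨Ah, hAhlip, hAheq⟩ := haLip.extend_real
  obtain ⟨Gh, hGhlip, hGheq⟩ := hgLip.extend_real
  -- bounds on Icc
  obtain ⟨Ma, hMa⟩ := isCompact_Icc.exists_bound_of_continuousOn acont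
  obtain ⟨MT', hMT'⟩ := isCompact_Icc.exists_bound_of_continuousOn hT'c
  obtain ⟨Mg, hMg⟩ := isCompact_Icc.exists_bound_of_continuousOn gcont
  have h0mem : (0:ℝ) ∈ Icc 0 ℓ := left_mem_Icc.2 hℓ.le
  have hℓmem : ℓ ∈ Icc 0 ℓ := right_mem_Icc.2 hℓ.le
  have hMT'0 : 0 ≤ MT' := (norm_nonneg _).trans (hMT' 0 h0mem)
  have hMa0 : 0 ≤ Ma := (norm_nonneg _).trans (hMa 0 h0mem)
  have hMg0 : 0 ≤ Mg := (norm_nonneg _).trans (hMg 0 h0mem)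
  have hTbd : ∀ x ∈ Icc 0 ℓ, |T x - Tinf| ≤ Td - Tinf := by
    intro x hx
    rw [abs_le]
    constructor
    · have := hTlb x hx; linarith
    · have := hTub x hx; linarith
  -- T - Td is Lipschitz on Icc
  have hTlip : LipschitzOnWith ⟨MT', hMT'0⟩ (fun x => T x - Td) (Icc 0 ℓ) := by
    apply (convex_Icc 0 ℓ).lipschitzOnWith_of_nnnorm_hasDerivWithin_le (f' := T')
      (fun x hx => (hTd' x hx).sub_const _)
    intro x hx
    apply NNReal.coe_le_coe.1
    simp only [coe_nnnorm]; exact hMT' x hx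
  -- F = g * (T - Td)
  set F : ℝ → ℝ := fun x => g x * (T x - Td) with hFdef
  have hFlip : ∃ K : NNReal, LipschitzOnWith K F (Icc 0 ℓ) := by
    apply exists_lipschitzOnWith_mul hgLip hTlip (Mf := Mg) (Mg := Td - Tinf)
    · intro x hx; simpa using hMg x hx
    · intro x hx
      have h2 := hTub x hx
      have h3 := hTlb x hx
      rw [abs_le]
      constructor <;> linarith
  obtain ⟨KF, hFLip⟩ := hFlip
  obtain ⟨Fh, hFhlip, hFheq⟩ := hFLip.extend_real
  -- the a.e. derivative identity for Fh on Ioc 0 ℓ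
  have hderivF : ∀ᵐ x ∂(volume.restrict (Ioc 0 ℓ)),
      deriv Fh x = β * w x * (T x - Tinf) * (T x - Td) + g x * T' x := by
    rw [← Measure.restrict_congr_set Ioo_ae_eq_Ioc]
    have hrad := ae_restrict_of_ae (s := Ioo 0 ℓ) (hGhlip.ae_differentiableAt_of_real (μ := volume))
    filter_upwards [hODE, hrad, ae_restrict_mem measurableSet_Ioo] with x hGdiff hxdiff hx
    have hnhds : Icc (0:ℝ) ℓ ∈ 𝓝 x := Icc_mem_nhds hx.1 hx.2
    have hgeq : g =ᶠ[𝓝 x] Gh := by filter_upwards [hnhds] with y hy using hGheq hy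
    have hgdiff : DifferentiableAt ℝ g x := hxdiff.congr_of_eventuallyEq hgeq
    have hTat : HasDerivAt T (T' x) x := (hTd' x ⟨hx.1.le, hx.2.le⟩).hasDerivAt hnhds
    have hprod : HasDerivAt (fun y => g y * (T y - Td))
        (deriv g x * (T x - Td) + g x * T' x) x :=
      hgdiff.hasDerivAt.mul (hTat.sub_const _)
    have hFeq : Fh =ᶠ[𝓝 x] (fun y => g y * (T y - Td)) := by
      filter_upwards [hnhds] with y hy
      rw [← hFheq hy]
    have : deriv Fh x = deriv g x * (T x - Td) + g x * T' x :=
      hFeq.deriv_eq.trans hprod.deriv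
    rw [this, hGdiff]
  -- FTC for Fh
  have hFTC : ∫ x in (0:ℝ)..ℓ, deriv Fh x = F ℓ := by
    rw [lipschitz_integral_deriv hFhlip hℓ.le, ← hFheq h0mem, ← hFheq hℓmem]
    have : F 0 = 0 := by simp [hFdef, hT0]
    rw [this, sub_zero]
  -- value of F ℓ
  have hFℓ : F ℓ = βr * (a ℓ) ^ 2 * ((T ℓ - Tinf) * (Td - T ℓ)) := by
    simp only [hFdef, hgdef, hTl]
    ring
  -- sSup bound
  have hbdd : BddAbove (a '' Icc 0 ℓ) := (isCompact_Icc.image_of_continuousOn acont).bddAbove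
  have haℓS : a ℓ ≤ sSup (a '' Icc 0 ℓ) := le_csSup hbdd ⟨ℓ, hℓmem, rfl⟩
  have haℓ0 : 0 < a ℓ := ha0.trans_le (haLB ℓ hℓmem)
  -- boundary term bound
  have hbdry : F ℓ ≤ βr * (sSup (a '' Icc 0 ℓ)) ^ 2 * (Td - Tinf) ^ 2 := by
    rw [hFℓ]
    have h1 : 0 ≤ T ℓ - Tinf := by have := hTlb ℓ hℓmem; linarith
    have h2 : 0 ≤ Td - T ℓ := by have := hTub ℓ hℓmem; linarith
    have h3 : T ℓ - Tinf ≤ Td - Tinf := by linarith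
    have h4 : Td - T ℓ ≤ Td - Tinf := by linarith
    have h5 : (T ℓ - Tinf) * (Td - T ℓ) ≤ (Td - Tinf) ^ 2 := by nlinarith
    have h6 : (a ℓ) ^ 2 ≤ (sSup (a '' Icc 0 ℓ)) ^ 2 := by nlinarith
    have h7 : (0:ℝ) ≤ (T ℓ - Tinf) * (Td - T ℓ) := mul_nonneg h1 h2
    calc βr * (a ℓ) ^ 2 * ((T ℓ - Tinf) * (Td - T ℓ))
        = βr * ((a ℓ) ^ 2 * ((T ℓ - Tinf) * (Td - T ℓ))) := by ring
      _ ≤ βr * ((sSup (a '' Icc 0 ℓ)) ^ 2 * (Td - Tinf) ^ 2) :=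
          mul_le_mul_of_nonneg_left (mul_le_mul h6 h5 h7 (sq_nonneg _)) hβr
      _ = βr * (sSup (a '' Icc 0 ℓ)) ^ 2 * (Td - Tinf) ^ 2 := by ring
  -- measurability
  have measIoc : MeasurableSet (Ioc (0:ℝ) ℓ) := measurableSet_Ioc
  have aesm_a : AEStronglyMeasurable a (volume.restrict (Ioc 0 ℓ)) :=
    (acont.mono Ioc_subset_Icc_self).aestronglyMeasurable measIoc
  have aesm_T : AEStronglyMeasurable T (volume.restrict (Ioc 0 ℓ)) :=
    (Tcont.mono Ioc_subset_Icc_self).aestronglyMeasurable measIoc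
  have aesm_T' : AEStronglyMeasurable T' (volume.restrict (Ioc 0 ℓ)) :=
    (hT'c.mono Ioc_subset_Icc_self).aestronglyMeasurable measIoc
  have aesm_g : AEStronglyMeasurable g (volume.restrict (Ioc 0 ℓ)) :=
    (gcont.mono Ioc_subset_Icc_self).aestronglyMeasurable measIoc
  have aesm_w : AEStronglyMeasurable w (volume.restrict (Ioc 0 ℓ)) := by
    apply aesm_a.mul
    exact (Measurable.sqrt (((measurable_deriv a).pow_const 2).const_add 1)).aestronglyMeasurable
  have aesm_Tm : AEStronglyMeasurable (fun x => T x - Tinf) (volume.restrict (Ioc 0 ℓ)) :=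
    aesm_T.sub aestronglyMeasurable_const
  have aesm_TmTd : AEStronglyMeasurable (fun x => T x - Td) (volume.restrict (Ioc 0 ℓ)) :=
    aesm_T.sub aestronglyMeasurable_const
  -- bound for w
  set Cw : ℝ := Ma * Real.sqrt (1 + (Ka:ℝ) ^ 2) with hCwdef
  have hCw0 : 0 ≤ Cw := mul_nonneg hMa0 (Real.sqrt_nonneg _)
  have hw_ae : ∀ᵐ x ∂(volume.restrict (Ioc 0 ℓ)), |w x| ≤ Cw := by
    rw [← Measure.restrict_congr_set Ioo_ae_eq_Ioc]
    filter_upwards [ae_restrict_mem measurableSet_Ioo] with x hx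
    have hxI : x ∈ Icc 0 ℓ := ⟨hx.1.le, hx.2.le⟩
    have hda : deriv a x = deriv Ah x := (deriv_ext_of_eqOn hAheq hx).symm
    have h1 : |deriv a x| ≤ (Ka:ℝ) := by rw [hda]; exact abs_deriv_le_of_lipschitz hAhlip x
    have h2 : Real.sqrt (1 + deriv a x ^ 2) ≤ Real.sqrt (1 + (Ka:ℝ) ^ 2) :=
      Real.sqrt_le_sqrt (by nlinarith [sq_abs (deriv a x), abs_nonneg (deriv a x)])
    calc |w x| = |a x| * Real.sqrt (1 + deriv a x ^ 2) := by
          rw [hwdef, abs_mul, abs_of_nonneg (Real.sqrt_nonneg _)]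
      _ ≤ Ma * Real.sqrt (1 + (Ka:ℝ) ^ 2) :=
          mul_le_mul (by simpa using hMa x hxI) h2 (Real.sqrt_nonneg _) hMa0
  -- the four integrands
  set f1 : ℝ → ℝ := fun x => a0 * min β a0 * ((T x - Tinf) ^ 2 + (T' x) ^ 2) with hf1
  set f2 : ℝ → ℝ := fun x => β * w x * (T x - Tinf) ^ 2 + g x * T' x with hf2
  set f3 : ℝ → ℝ := fun x => β * w x * (T x - Tinf) * (T x - Td) + g x * T' x with hf3
  set f4 : ℝ → ℝ := fun x => w x * (T x - Tinf) with hf4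
  have ame_T := aesm_T.aemeasurable
  have ame_T' := aesm_T'.aemeasurable
  have ame_g := aesm_g.aemeasurable
  have ame_w := aesm_w.aemeasurable
  have ame_u : AEMeasurable (fun x => T x - Tinf) (volume.restrict (Ioc 0 ℓ)) :=
    ame_T.sub aemeasurable_const
  have ame_v : AEMeasurable (fun x => T x - Td) (volume.restrict (Ioc 0 ℓ)) :=
    ame_T.sub aemeasurable_const
  have aesm_f1 : AEStronglyMeasurable f1 (volume.restrict (Ioc 0 ℓ)) :=
    (aemeasurable_const.mul ((ame_u.pow_const 2).add (ame_T'.pow_const 2))).aestronglyMeasurable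
  have aesm_f2 : AEStronglyMeasurable f2 (volume.restrict (Ioc 0 ℓ)) :=
    (((aemeasurable_const.mul ame_w).mul (ame_u.pow_const 2)).add
      (ame_g.mul ame_T')).aestronglyMeasurable
  have aesm_f3 : AEStronglyMeasurable f3 (volume.restrict (Ioc 0 ℓ)) :=
    ((((aemeasurable_const.mul ame_w).mul ame_u).mul ame_v).add
      (ame_g.mul ame_T')).aestronglyMeasurable
  have aesm_f4 : AEStronglyMeasurable f4 (volume.restrict (Ioc 0 ℓ)) :=
    (ame_w.mul ame_u).aestronglyMeasurable
  -- integrability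
  have hmemIcc : ∀ᵐ x ∂(volume.restrict (Ioc 0 ℓ)), x ∈ Icc 0 ℓ := by
    filter_upwards [ae_restrict_mem measIoc] with x hx using Ioc_subset_Icc_self hx
  have int1 : IntegrableOn f1 (Ioc 0 ℓ) volume := by
    apply integrableOn_of_bounded_aesm aesm_f1
      (C := |a0 * min β a0| * ((Td - Tinf) ^ 2 + MT' ^ 2))
    filter_upwards [hmemIcc] with x hx
    have h1 := hTbd x hx
    have h2 := hMT' x hx
    rw [hf1, abs_mul]
    apply mul_le_mul_of_nonneg_left _ (abs_nonneg _)
    rw [abs_of_nonneg (by positivity)]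
    have := abs_nonneg (T x - Tinf)
    have := abs_nonneg (T' x)
    rw [Real.norm_eq_abs] at h2
    nlinarith [sq_abs (T x - Tinf), sq_abs (T' x)]
  have hbound23 : ∀ᵐ x ∂(volume.restrict (Ioc 0 ℓ)),
      |g x * T' x| ≤ Mg * MT' := by
    filter_upwards [hmemIcc] with x hx
    rw [abs_mul]
    exact mul_le_mul (by simpa using hMg x hx) (by simpa using hMT' x hx)
      (abs_nonneg _) hMg0
  have int2 : IntegrableOn f2 (Ioc 0 ℓ) volume := by
    apply integrableOn_of_bounded_aesm aesm_f2
      (C := β * Cw * (Td - Tinf) ^ 2 + Mg * MT')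
    filter_upwards [hmemIcc, hw_ae, hbound23] with x hx hwx hgx
    have h1 := hTbd x hx
    simp only [hf2]
    refine (abs_add_le _ _).trans (add_le_add ?_ hgx)
    rw [abs_mul, abs_mul, abs_of_nonneg hβ.le, abs_of_nonneg (sq_nonneg (T x - Tinf))]
    have h2 : (T x - Tinf) ^ 2 ≤ (Td - Tinf) ^ 2 := by
      nlinarith [sq_abs (T x - Tinf), abs_nonneg (T x - Tinf)]
    have c1 : |w x| * (T x - Tinf) ^ 2 ≤ Cw * (Td - Tinf) ^ 2 :=
      mul_le_mul hwx h2 (sq_nonneg _) hCw0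
    calc β * |w x| * (T x - Tinf) ^ 2 = β * (|w x| * (T x - Tinf) ^ 2) := by ring
      _ ≤ β * (Cw * (Td - Tinf) ^ 2) := mul_le_mul_of_nonneg_left c1 hβ.le
      _ = β * Cw * (Td - Tinf) ^ 2 := by ring
  have int3 : IntegrableOn f3 (Ioc 0 ℓ) volume := by
    apply integrableOn_of_bounded_aesm aesm_f3
      (C := β * Cw * (Td - Tinf) ^ 2 + Mg * MT')
    filter_upwards [hmemIcc, hw_ae, hbound23] with x hx hwx hgx
    have h1 := hTbd x hx
    have h1' : |T x - Td| ≤ Td - Tinf := by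
      have h2 := hTub x hx; have h3 := hTlb x hx
      rw [abs_le]; constructor <;> linarith
    simp only [hf3]
    refine (abs_add_le _ _).trans (add_le_add ?_ hgx)
    rw [abs_mul, abs_mul, abs_mul, abs_of_nonneg hβ.le]
    have h0 : (0:ℝ) ≤ Td - Tinf := by linarith
    have c1 : |w x| * |T x - Tinf| ≤ Cw * (Td - Tinf) :=
      mul_le_mul hwx h1 (abs_nonneg _) hCw0
    have c2 : (|w x| * |T x - Tinf|) * |T x - Td| ≤ (Cw * (Td - Tinf)) * (Td - Tinf) :=
      mul_le_mul c1 h1' (abs_nonneg _) (mul_nonneg hCw0 h0)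
    calc β * |w x| * |T x - Tinf| * |T x - Td|
        = β * ((|w x| * |T x - Tinf|) * |T x - Td|) := by ring
      _ ≤ β * ((Cw * (Td - Tinf)) * (Td - Tinf)) := mul_le_mul_of_nonneg_left c2 hβ.le
      _ = β * Cw * (Td - Tinf) ^ 2 := by ring
  have int4 : IntegrableOn f4 (Ioc 0 ℓ) volume := by
    apply integrableOn_of_bounded_aesm aesm_f4 (C := Cw * (Td - Tinf))
    filter_upwards [hmemIcc, hw_ae] with x hx hwx
    rw [hf4, abs_mul]
    exact mul_le_mul hwx (hTbd x hx) (abs_nonneg _) hCw0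
  have intw : IntegrableOn w (Ioc 0 ℓ) volume :=
    integrableOn_of_bounded_aesm aesm_w hw_ae
  -- P = F ℓ
  have hP : ∫ x in Ioc 0 ℓ, f3 x = F ℓ := by
    rw [← integral_congr_ae hderivF, ← intervalIntegral.integral_of_le hℓ.le, hFTC]
  -- splitting f2
  have hEbig : ∫ x in Ioc 0 ℓ, f2 x
      = (∫ x in Ioc 0 ℓ, f3 x) + β * (Td - Tinf) * ∫ x in Ioc 0 ℓ, f4 x := by
    have hsplit : f2 = fun x => f3 x + β * (Td - Tinf) * f4 x := by
      funext x; rw [hf2, hf3, hf4]; ring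
    rw [hsplit, integral_add int3 ((int4.const_mul _)), MeasureTheory.integral_const_mul]
  -- main pointwise comparison
  have hcomp : ∫ x in Ioc 0 ℓ, f1 x ≤ ∫ x in Ioc 0 ℓ, f2 x := by
    apply setIntegral_mono_on int1 int2 measIoc
    intro x hx
    have hxI : x ∈ Icc 0 ℓ := Ioc_subset_Icc_self hx
    have h2 : a0 ≤ a x := haLB x hxI
    have hsq : (1:ℝ) ≤ Real.sqrt (1 + deriv a x ^ 2) :=
      calc (1:ℝ) = Real.sqrt 1 := Real.sqrt_one.symm
        _ ≤ _ := Real.sqrt_le_sqrt (by nlinarith [sq_nonneg (deriv a x)])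
    have hw1 : a0 ≤ w x := by
      rw [hwdef]
      calc a0 = a0 * 1 := by ring
        _ ≤ a x * Real.sqrt (1 + deriv a x ^ 2) :=
            mul_le_mul h2 hsq zero_le_one (ha0.le.trans h2)
    have hmin1 : min β a0 ≤ β := min_le_left _ _
    have hmin2 : min β a0 ≤ a0 := min_le_right _ _
    have e1 : a0 * min β a0 * (T x - Tinf) ^ 2 ≤ β * w x * (T x - Tinf) ^ 2 := by
      apply mul_le_mul_of_nonneg_right _ (sq_nonneg _)
      calc a0 * min β a0 ≤ a0 * β := mul_le_mul_of_nonneg_left hmin1 ha0.le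
        _ = β * a0 := by ring
        _ ≤ β * w x := mul_le_mul_of_nonneg_left hw1 hβ.le
    have e2 : a0 * min β a0 * (T' x) ^ 2 ≤ g x * T' x := by
      have hge : g x * T' x = a x ^ 2 * (T' x) ^ 2 := by rw [hgdef]; ring
      rw [hge]
      apply mul_le_mul_of_nonneg_right _ (sq_nonneg _)
      nlinarith
    calc f1 x = a0 * min β a0 * (T x - Tinf) ^ 2 + a0 * min β a0 * (T' x) ^ 2 := by
          rw [hf1]; ring
      _ ≤ β * w x * (T x - Tinf) ^ 2 + g x * T' x := add_le_add e1 e2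
      _ = f2 x := by rw [hf2]
  -- Q ≤ (Td - Tinf) ∫ w
  have hQ : ∫ x in Ioc 0 ℓ, f4 x ≤ (Td - Tinf) * ∫ x in Ioc 0 ℓ, w x := by
    rw [← MeasureTheory.integral_const_mul]
    apply setIntegral_mono_on int4 (intw.const_mul _) measIoc
    intro x hx
    have hxI : x ∈ Icc 0 ℓ := Ioc_subset_Icc_self hx
    have hw0 : 0 ≤ w x := by
      rw [hwdef]
      exact mul_nonneg (ha0.le.trans (haLB x hxI)) (Real.sqrt_nonneg _)
    have hle : T x - Tinf ≤ Td - Tinf := by have := hTub x hxI; linarith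
    calc f4 x = w x * (T x - Tinf) := by rw [hf4]
      _ ≤ w x * (Td - Tinf) := mul_le_mul_of_nonneg_left hle hw0
      _ = (Td - Tinf) * w x := by ring
  -- conclude
  rw [intervalIntegral.integral_of_le hℓ.le, intervalIntegral.integral_of_le hℓ.le]
  have hLHS : a0 * min β a0 * (∫ x in Ioc 0 ℓ, ((T x - Tinf) ^ 2 + (T' x) ^ 2))
      = ∫ x in Ioc 0 ℓ, f1 x := (MeasureTheory.integral_const_mul _ _).symm
  rw [hLHS]
  have hfinal2 : β * (Td - Tinf) * ∫ x in Ioc 0 ℓ, f4 x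
      ≤ β * (Td - Tinf) ^ 2 * ∫ x in Ioc 0 ℓ, w x := by
    have h0 : (0:ℝ) ≤ β * (Td - Tinf) := mul_nonneg hβ.le (by linarith)
    calc β * (Td - Tinf) * ∫ x in Ioc 0 ℓ, f4 x
        ≤ β * (Td - Tinf) * ((Td - Tinf) * ∫ x in Ioc 0 ℓ, w x) :=
          mul_le_mul_of_nonneg_left hQ h0
      _ = β * (Td - Tinf) ^ 2 * ∫ x in Ioc 0 ℓ, w x := by ring
  calc ∫ x in Ioc 0 ℓ, f1 x ≤ ∫ x in Ioc 0 ℓ, f2 x := hcomp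
    _ = (∫ x in Ioc 0 ℓ, f3 x) + β * (Td - Tinf) * ∫ x in Ioc 0 ℓ, f4 x := hEbig
    _ = F ℓ + β * (Td - Tinf) * ∫ x in Ioc 0 ℓ, f4 x := by rw [hP]
    _ ≤ βr * (sSup (a '' Icc 0 ℓ)) ^ 2 * (Td - Tinf) ^ 2
        + β * (Td - Tinf) ^ 2 * ∫ x in Ioc 0 ℓ, w x := add_le_add hbdry hfinal2
end
end
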